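/- arXiv:2403.05635 — 11 statements merged into one kernel-verified Lean document; each statement's English description precedes it below -/
import Mathlib

section
/- Let p be a prime and let R be a finite commutative local ring with maximal ideal M whose residue field R/M has characteristic ℓ ≠ p. Then M + (R^×)^p = (R^×)^p; that is, for every m ∈ M and every unit x ∈ R^× there exists a unit y ∈ R^× with m + x^p = y^p. (Consequently M is a homogeneous set in G_R(p).) -/
open Polynomial

/-- Newton's method (Hensel's lemma with nilpotent error) for `X ^ n - (m + x ^ n)` at its
approximate root `x`. -/
theorem exists_units_pow_eq_add_pow_of_isNilpotent {R : Type*} [CommRing R] {n : ℕ}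
    (hn : IsUnit (n : R)) {m : R} (hm : IsNilpotent m) (x : Rˣ) :
    ∃ y : Rˣ, m + (x : R) ^ n = (y : R) ^ n := by
  set P : R[X] := X ^ n - C (m + (x : R) ^ n)
  have hP : aeval (x : R) P = -m := by simp [P]
  have hP' : aeval (x : R) (derivative P) = n * (x : R) ^ (n - 1) := by
    simp only [P, derivative_sub, derivative_C, derivative_X_pow, sub_zero]
    simp
  obtain ⟨r, ⟨hxr, hr⟩, -⟩ := existsUnique_nilpotent_sub_and_aeval_eq_zero
    (hP ▸ hm.neg) (hP' ▸ hn.mul (x.isUnit.pow _))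
  have hr_unit : IsUnit r := by
    simpa using hxr.neg.isUnit_add_left_of_commute x.isUnit (Commute.all _ _)
  refine ⟨hr_unit.unit, ?_⟩
  simpa [P, sub_eq_zero, eq_comm] using hr

theorem IsLocalRing.isUnit_natCast_iff_not_dvd {R : Type*} [CommRing R] [IsLocalRing R]
    (ℓ : ℕ) [CharP (ResidueField R) ℓ] (n : ℕ) : IsUnit (n : R) ↔ ¬ ℓ ∣ n := by
  rw [← residue_ne_zero_iff_isUnit, map_natCast, ne_eq, CharP.cast_eq_zero_iff _ ℓ]

theorem stmt_0 (p : ℕ) (hp : p.Prime) (R : Type*) [CommRing R] [IsLocalRing R] [Fintype R]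
    (ℓ : ℕ) (hℓ : ℓ.Prime) (hchar : CharP (IsLocalRing.ResidueField R) ℓ) (hℓp : ℓ ≠ p) :
    ∀ m ∈ IsLocalRing.maximalIdeal R, ∀ x : Rˣ, ∃ y : Rˣ,
      m + (x : R) ^ p = (y : R) ^ p := by
  intro m hm x
  have hp_unit : IsUnit (p : R) :=
    (IsLocalRing.isUnit_natCast_iff_not_dvd ℓ p).mpr
      ((Nat.prime_dvd_prime_iff_eq hℓ hp).not.mpr hℓp)
  -- `R` is finite, hence Artinian of Krull dimension zero, so `M` is its nilradical.
  have hm_nil : IsNilpotent m := Ring.KrullDimLE.isNilpotent_iff_mem_maximalIdeal.mpr hm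
  exact exists_units_pow_eq_add_pow_of_isNilpotent hp_unit hm_nil x
end

section
/- Let p be a prime and let F be a finite field of characteristic ℓ ≠ p with -1 ∈ (F^×)^p. If either ℓ is odd or |F| > (p+1)^4, then the p-unitary Cayley graph G_F(p) is not bipartite (i.e. it is not 2-colorable). -/
/-! An odd closed walk rules out a 2-coloring, and a closed walk in `G_R(p)` is a multiset of
units whose `p`-th powers sum to zero. In odd characteristic `ℓ`, take `ℓ` copies of `1`. In
characteristic `2`, take every unit once: there are `|F| - 1` of them, an odd number, and
`∑ u^p = 0` over `Fˣ` because `|F| - 1 ∤ p` once `|F| > p + 1`. -/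

/-- The `p`-unitary Cayley graph of a commutative ring `R`: vertices are elements of `R`,
and distinct `a, b` are adjacent iff `a - b` is a `p`-th power of a unit.
(When `-1 ∈ (Rˣ)^p`, the relation is symmetric, so `fromRel` gives exactly this graph.) -/
def pUnitaryCayley (R : Type*) [CommRing R] (p : ℕ) : SimpleGraph R :=
  SimpleGraph.fromRel (fun a b => ∃ u : Rˣ, a - b = (u : R) ^ p)

open SimpleGraph

section CommRing

variable {R : Type*} [CommRing R] [Nontrivial R] (p : ℕ)

theorem pUnitaryCayley_adj_add_pow (a : R) (u : Rˣ) :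
    (pUnitaryCayley R p).Adj a (a + (u : R) ^ p) := by
  rw [pUnitaryCayley, fromRel_adj]
  refine ⟨by simpa using (u ^ p).ne_zero, Or.inr ⟨u, add_sub_cancel_left a _⟩⟩

theorem exists_walk_pUnitaryCayley (s : Multiset Rˣ) (a : R) :
    ∃ w : (pUnitaryCayley R p).Walk a (a + (s.map fun u : Rˣ => (u : R) ^ p).sum),
      w.length = Multiset.card s := by
  induction s using Multiset.induction_on generalizing a with
  | empty => exact ⟨Walk.nil.copy rfl (by simp), by rw [Walk.length_copy]; rfl⟩
  | cons u s ih =>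
    obtain ⟨w, hw⟩ := ih (a + (u : R) ^ p)
    refine ⟨(Walk.cons (pUnitaryCayley_adj_add_pow p a u) w).copy rfl
      (by simp [add_assoc]), ?_⟩
    simp [hw]

theorem pUnitaryCayley_not_colorable_two_of_sum_pow_eq_zero (s : Multiset Rˣ)
    (hodd : Odd (Multiset.card s)) (hsum : (s.map fun u : Rˣ => (u : R) ^ p).sum = 0) :
    ¬ (pUnitaryCayley R p).Colorable 2 := by
  obtain ⟨w, hw⟩ := exists_walk_pUnitaryCayley p s 0
  intro hcol
  have heven := two_colorable_iff_forall_loop_even.mp hcol 0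
    (w.copy rfl (by rw [hsum, add_zero]))
  rw [Walk.length_copy, hw] at heven
  exact Nat.not_even_iff_odd.mpr hodd heven

theorem pUnitaryCayley_not_colorable_two_of_odd_char (ℓ : ℕ) [CharP R ℓ] (hℓ : Odd ℓ) :
    ¬ (pUnitaryCayley R p).Colorable 2 :=
  pUnitaryCayley_not_colorable_two_of_sum_pow_eq_zero p (.replicate ℓ 1) (by simpa using hℓ)
    (by simp)

end CommRing

theorem pUnitaryCayley_not_colorable_two_of_even_card {F : Type*} [Field F] [Fintype F]
    {p : ℕ} (hp : 0 < p) (hF : Even (Fintype.card F)) (hpF : p + 1 < Fintype.card F) :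
    ¬ (pUnitaryCayley F p).Colorable 2 := by
  classical
  refine pUnitaryCayley_not_colorable_two_of_sum_pow_eq_zero p (Finset.univ : Finset Fˣ).val
    ?_ ?_
  · rw [Finset.card_val, Finset.card_univ, Fintype.card_units]
    exact Nat.Even.sub_odd Fintype.card_pos hF odd_one
  · have hndvd : ¬ Fintype.card F - 1 ∣ p := Nat.not_dvd_of_pos_of_lt hp (by omega)
    simpa [hndvd] using FiniteField.sum_pow_units F p

theorem stmt_4_general (p ℓ : ℕ) (hp : p.Prime) (hℓ : ℓ.Prime)
    (F : Type*) [Field F] [Fintype F] (hchar : CharP F ℓ)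
    (h : Odd ℓ ∨ (p + 1) ^ 4 < Fintype.card F) :
    ¬ (pUnitaryCayley F p).Colorable 2 := by
  rcases hℓ.eq_two_or_odd' with rfl | hodd
  · have hF : Even (Fintype.card F) := by
      rw [Nat.even_iff]
      exact FiniteField.even_card_of_char_two (ringChar.eq F 2)
    have hbig : (p + 1) ^ 4 < Fintype.card F := h.resolve_left (by decide)
    have hp4 : p + 1 < (p + 1) ^ 4 := lt_self_pow₀ (Nat.succ_lt_succ hp.pos) (by norm_num)
    exact pUnitaryCayley_not_colorable_two_of_even_card hp.pos hF (hp4.trans hbig)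
  · exact pUnitaryCayley_not_colorable_two_of_odd_char p ℓ hodd

theorem stmt_4 (p ℓ : ℕ) (hp : p.Prime) (hℓ : ℓ.Prime) (hne : ℓ ≠ p)
    (F : Type*) [Field F] [Fintype F] (hchar : CharP F ℓ)
    (hneg : ∃ u : Fˣ, (u : F) ^ p = -1)
    (h : Odd ℓ ∨ (p + 1) ^ 4 < Fintype.card F) :
    ¬ (pUnitaryCayley F p).Colorable 2 :=
  stmt_4_general p ℓ hp hℓ F hchar h
end

section
/- Fix a prime p and a finite simple graph G. There exists a constant C (depending on p and G) such that for every prime ℓ with ℓ > C, p ∣ ℓ − 1, and -1 ∈ (F_ℓ^×)^p, the graph G is isomorphic to an induced subgraph of the p-unitary Cayley graph G_{F_ℓ}(p); that is, there is a graph embedding of G into G_{F_ℓ}(p). -/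
/-!
Let `χ` be a character of order `p` of `F = 𝔽_ℓ` (it exists as `p ∣ ℓ - 1`). Its kernel on `Fˣ`
is the set of `p`-th powers and `χ (-1) = 1`, so it suffices to find `x : V → F` with
`χ (x a - x b) = 1` on the edges and `χ (x a - x b) = ζ ≠ 1` on the non-edges of `G`.

Let `n = |V|` and let `E` be the set of pairs of distinct vertices. Writing the indicator of
`χ d = w` as `p⁻¹ ∑ₖ w⁻ᵏ χᵏ d`, the number of such `x`, times `p ^ |E|`, is a combination with
unimodular coefficients of the sums `A_K = ∑ₓ ∏_{ab ∈ E} χ^(K ab) (x a - x b)`, `K : E → ZMod p`.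
The pattern `K = 0` counts the injective `x`, at least `(ℓ - n) ^ n` of them. For `K ≠ 0`, isolate
a vertex `v` of a pair `vw` with `K vw ≠ 0`: Cauchy–Schwarz in the other coordinates bounds
`|A_K|²` by `ℓ ^ (n - 1)` times a second moment, which the correlation identity
`∑ₜ χ (y - t) χ⁻¹ (y' - t) = -1` (for `y ≠ y'`) bounds by `2 ℓ ^ n`. So `|A_K|² ≤ 2 ℓ ^ (2n - 1)`
without any appeal to the Weil bound, and the main term wins once `ℓ > 2 · 4 ^ n · p ^ (2|E|)`.
-/

open Finset ComplexConjugate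

theorem pUnitaryCayley_adj_iff {R : Type*} [CommRing R] {p : ℕ}
    (hneg : ∃ u : Rˣ, (u : R) ^ p = -1) {a b : R} :
    (pUnitaryCayley R p).Adj a b ↔ a ≠ b ∧ ∃ u : Rˣ, a - b = (u : R) ^ p := by
  obtain ⟨u₀, hu₀⟩ := hneg
  have hswap : ∀ a b : R, (∃ u : Rˣ, a - b = (u : R) ^ p) → ∃ u : Rˣ, b - a = (u : R) ^ p :=
    fun a b ⟨u, hu⟩ => ⟨u₀ * u, by rw [Units.val_mul, mul_pow, hu₀, ← hu]; ring⟩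
  rw [pUnitaryCayley, SimpleGraph.fromRel_adj]
  exact and_congr_right fun _ => ⟨fun h => h.elim id (hswap b a), Or.inl⟩

namespace MulChar

variable {F : Type*} [Field F]

theorem norm_apply_le_one {R : Type*} [CommMonoid R] [Finite Rˣ] (χ : MulChar R ℂ) (a : R) :
    ‖χ a‖ ≤ 1 := by
  by_cases ha : IsUnit a
  · obtain ⟨u, rfl⟩ := ha
    refine (pow_eq_one_iff_of_nonneg (norm_nonneg _) (Nat.card_pos (α := Rˣ)).ne').mp ?_ |>.le
    rw [← norm_pow, ← map_pow, ← Units.val_pow_eq_pow_val, pow_card_eq_one', Units.val_one,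
      map_one, norm_one]
  · simp [χ.map_nonunit ha]

theorem pow_apply_neg_one {R : Type*} [CommRing R] {R' : Type*} [CommMonoidWithZero R']
    {χ : MulChar R R'} (hχ : χ (-1) = 1) (k : ℕ) : (χ ^ k) (-1) = 1 := by
  simpa [hχ] using χ.pow_apply_coe k (-1)

theorem exists_eq_pow_iff_apply_eq_one [Finite F] {R : Type*} [CommMonoidWithZero R]
    [Nontrivial R] {χ : MulChar F R} {p : ℕ} (hχ : orderOf χ = p) (a : F) :
    (∃ u : Fˣ, a = (u : F) ^ p) ↔ χ a = 1 := by
  constructor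
  · rintro ⟨u, rfl⟩
    rw [map_pow, ← pow_apply_coe, ← hχ, pow_orderOf_eq_one, one_apply u.isUnit]
  · intro ha
    have ha0 : a ≠ 0 := by rintro rfl; exact zero_ne_one (χ.map_zero.symm.trans ha)
    classical
    obtain ⟨g, hg⟩ := IsCyclic.exists_generator (α := Fˣ)
    obtain ⟨k, hk : g ^ k = Units.mk0 a ha0⟩ :=
      mem_powers_iff_mem_zpowers.mpr (hg (Units.mk0 a ha0))
    have hdvd : p ∣ k := by
      rw [← hχ, orderOf_dvd_iff_pow_eq_one, eq_iff hg, pow_apply_coe, one_apply g.isUnit,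
        ← map_pow, ← Units.val_pow_eq_pow_val, hk, Units.val_mk0, ha]
    obtain ⟨m, rfl⟩ := hdvd
    exact ⟨g ^ m, by rw [← Units.val_pow_eq_pow_val, ← pow_mul, mul_comm, hk, Units.val_mk0]⟩

theorem natCast_mul_ite_eq_sum_pow {χ : MulChar F ℂ} {p : ℕ} (hχ : χ ^ p = 1) (hp : p ≠ 0)
    {w : ℂ} (hw : w ^ p = 1) (a : F) :
    (p : ℂ) * (if χ a = w then 1 else 0) = ∑ k : Fin p, w⁻¹ ^ (k : ℕ) * (χ ^ (k : ℕ)) a := by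
  rw [Fin.sum_univ_eq_sum_range (fun k => w⁻¹ ^ k * (χ ^ k) a)]
  have hw0 : w ≠ 0 := by rintro rfl; simp [hp] at hw
  rcases eq_or_ne a 0 with rfl | ha
  · simp [Ne.symm hw0]
  have hpow : ∀ k : ℕ, w⁻¹ ^ k * (χ ^ k) a = (w⁻¹ * χ a) ^ k := fun k => by
    rw [← Units.val_mk0 ha, pow_apply_coe, mul_pow]
  have hr : (w⁻¹ * χ a) ^ p = 1 := by
    rw [← hpow, hχ, one_apply ha.isUnit, inv_pow, hw, inv_one, one_mul]
  simp_rw [hpow]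
  by_cases h : χ a = w
  · simp [h, hw0]
  · have hr1 : w⁻¹ * χ a ≠ 1 := fun h' => h ((inv_mul_eq_one₀ hw0).mp h').symm
    rw [if_neg h, mul_zero, geom_sum_eq hr1, hr, sub_self, zero_div]

/-- The substitution `t = y' - s⁻¹` (a bijection, with `s = 0 ↦ y'`) turns the sum into
`∑ s, χ ((y - y') * s + 1)`, a full character sum, minus the term `s = 0`. -/
theorem sum_apply_sub_mul_inv_apply_sub [Fintype F] {R : Type*} [CommRing R] [IsDomain R]
    {χ : MulChar F R} (hχ : χ ≠ 1) {y y' : F} (h : y ≠ y') :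
    ∑ t, χ (y - t) * χ⁻¹ (y' - t) = -1 := by
  classical
  have hd : y - y' ≠ 0 := sub_ne_zero.mpr h
  have hsubst : ∀ s : F, χ (y - (y' - s⁻¹)) * χ⁻¹ (y' - (y' - s⁻¹))
      = χ ((y - y') * s + 1) - if s = 0 then 1 else 0 := by
    intro s
    rcases eq_or_ne s 0 with rfl | hs
    · simp
    · rw [sub_sub_cancel, inv_apply', inv_inv, ← map_mul, if_neg hs, sub_zero]
      congr 1
      field_simp
      ring
  rw [← Equiv.sum_comp (Equiv.subLeft y'), ← Equiv.sum_comp (Equiv.inv F)]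
  simp only [Equiv.subLeft_apply, Equiv.inv_apply, hsubst, sum_sub_distrib]
  rw [Fintype.sum_bijective (fun s => (y - y') * s + 1)
    ((Equiv.mulLeft₀ _ hd).trans (Equiv.addRight 1)).bijective _ χ fun _ => rfl]
  simp [sum_eq_zero_of_ne_one hχ]

theorem norm_sum_apply_sub_mul_inv_apply_sub_le [Fintype F] (χ : MulChar F ℂ) (y y' : F) :
    ‖∑ t, χ (y - t) * χ⁻¹ (y' - t)‖ ≤ Fintype.card F := by
  refine (norm_sum_le _ _).trans ?_
  refine (sum_le_sum fun t _ => ?_).trans (b := ∑ _t : F, (1 : ℝ)) (by simp)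
  rw [norm_mul]
  exact mul_le_one₀ (χ.norm_apply_le_one _) (norm_nonneg _) (χ⁻¹.norm_apply_le_one _)

variable {R : Type*} [CommRing R] {R' : Type*} [CommMonoidWithZero R']

def sym2Sub (χ : MulChar R R') (hχ : χ (-1) = 1) : Sym2 R → R' :=
  Sym2.lift ⟨fun a b => χ (a - b), fun a b => by
    show χ (a - b) = χ (b - a)
    rw [← neg_sub b, ← neg_one_mul, map_mul, hχ, one_mul]⟩

@[simp]
theorem sym2Sub_mk (χ : MulChar R R') (hχ : χ (-1) = 1) (a b : R) :
    χ.sym2Sub hχ s(a, b) = χ (a - b) :=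
  rfl

theorem norm_sym2Sub_le_one [Finite Rˣ] (χ : MulChar R ℂ) (hχ : χ (-1) = 1) (s : Sym2 R) :
    ‖χ.sym2Sub hχ s‖ ≤ 1 := by
  induction s using Sym2.ind
  exact χ.norm_apply_le_one _

end MulChar

theorem sum_norm_sq_sum_prod {ι α β : Type*} [Fintype ι] [DecidableEq ι] [Fintype α] [Fintype β]
    (f : ι → α → β → ℂ) :
    ((∑ u : ι → β, ‖∑ z, ∏ j, f j z (u j)‖ ^ 2 : ℝ) : ℂ)
      = ∑ z, ∑ z', ∏ j, ∑ t, f j z t * conj (f j z' t) := by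
  push_cast
  simp_rw [← Complex.mul_conj', map_sum, map_prod, sum_mul_sum, ← prod_mul_distrib,
    Fintype.prod_sum]
  rw [sum_comm]
  exact sum_congr rfl fun z _ => sum_comm

theorem norm_sum_mul_sq_le {α : Type*} [Fintype α] (B g : α → ℂ) (hB : ∀ a, ‖B a‖ ≤ 1) :
    ‖∑ a, B a * g a‖ ^ 2 ≤ Fintype.card α * ∑ a, ‖g a‖ ^ 2 := by
  have hle : ‖∑ a, B a * g a‖ ≤ ∑ a, ‖g a‖ := (norm_sum_le _ _).trans <| sum_le_sum fun a _ => by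
    rw [norm_mul]
    exact mul_le_of_le_one_left (norm_nonneg _) (hB a)
  calc ‖∑ a, B a * g a‖ ^ 2 ≤ (∑ a, ‖g a‖) ^ 2 := by gcongr
    _ ≤ Fintype.card α * ∑ a, ‖g a‖ ^ 2 := by
      simpa using sq_sum_le_card_mul_sum_sq (s := univ) (f := fun a => ‖g a‖)

theorem two_mul_mul_pow_lt {q n M : ℕ} (hn : 2 * n ≤ q) (hq : 2 * 4 ^ n * M < q) :
    2 * M * q ^ (2 * n) < q * (q - n) ^ (2 * n) := by
  have hpow : q ^ (2 * n) ≤ 4 ^ n * (q - n) ^ (2 * n) :=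
    calc q ^ (2 * n) ≤ (2 * (q - n)) ^ (2 * n) := Nat.pow_le_pow_left (by omega) _
      _ = 4 ^ n * (q - n) ^ (2 * n) := by rw [mul_pow, pow_mul]; norm_num
  refine Nat.lt_of_mul_lt_mul_left (a := 4 ^ n) ?_
  calc 4 ^ n * (2 * M * q ^ (2 * n)) = 2 * 4 ^ n * M * q ^ (2 * n) := by ring
    _ < q * q ^ (2 * n) := Nat.mul_lt_mul_of_pos_right hq (pow_pos (by omega) _)
    _ ≤ q * (4 ^ n * (q - n) ^ (2 * n)) := Nat.mul_le_mul_left q hpow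
    _ = 4 ^ n * (q * (q - n) ^ (2 * n)) := by ring

section

variable {F : Type*} [Field F] [Fintype F]

/-- Expanding the square, the diagonal `z = z'` contributes at most `q ^ (|ι| + 1)`, and off the
diagonal the factor `j₀` is `-1` by `MulChar.sum_apply_sub_mul_inv_apply_sub`. -/
theorem sum_norm_sq_sum_prod_le {ι : Type*} [Fintype ι] [DecidableEq ι] (κ : ι → MulChar F ℂ)
    {j₀ : ι} (hj₀ : κ j₀ ≠ 1) :
    ∑ u : ι → F, ‖∑ z, ∏ j, κ j (z - u j)‖ ^ 2 ≤
      2 * (Fintype.card F : ℝ) ^ (Fintype.card ι + 1) := by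
  classical
  set q : ℝ := (Fintype.card F : ℝ)
  set m := Fintype.card ι
  have hm : m - 1 + 1 = m := Nat.sub_add_cancel (Fintype.card_pos_iff.mpr ⟨j₀⟩)
  have hterm : ∀ z z' : F, ∏ j, ‖∑ t, κ j (z - t) * (κ j)⁻¹ (z' - t)‖
      ≤ q ^ (m - 1) + if z = z' then q ^ m else 0 := by
    intro z z'
    split_ifs with hz
    · refine (prod_le_prod (fun _ _ => norm_nonneg _) fun j _ =>
        MulChar.norm_sum_apply_sub_mul_inv_apply_sub_le (κ j) z z').trans ?_
      simp only [prod_const, card_univ]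
      exact le_add_of_nonneg_left (by positivity)
    · rw [← mul_prod_erase _ _ (mem_univ j₀), MulChar.sum_apply_sub_mul_inv_apply_sub hj₀ hz,
        norm_neg, norm_one, one_mul, add_zero]
      refine (prod_le_prod (fun _ _ => norm_nonneg _) fun j _ =>
        MulChar.norm_sum_apply_sub_mul_inv_apply_sub_le (κ j) z z').trans ?_
      simp [q, m, card_erase_of_mem]
  have hexpand := sum_norm_sq_sum_prod fun j z t => κ j (z - t)
  simp_rw [← Complex.star_def, MulChar.star_apply'] at hexpand
  calc ∑ u : ι → F, ‖∑ z, ∏ j, κ j (z - u j)‖ ^ 2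
      = ‖∑ z, ∑ z', ∏ j, ∑ t, κ j (z - t) * (κ j)⁻¹ (z' - t)‖ := by
        rw [← hexpand, Complex.norm_real, Real.norm_of_nonneg (by positivity)]
    _ ≤ ∑ z : F, ∑ z' : F, (q ^ (m - 1) + if z = z' then q ^ m else 0) := by
        refine (norm_sum_le _ _).trans (sum_le_sum fun z _ => (norm_sum_le _ _).trans
          (sum_le_sum fun z' _ => ?_))
        rw [norm_prod]
        exact hterm z z'
    _ = 2 * q ^ (m + 1) := by
        simp only [sum_add_distrib, sum_ite_eq, mem_univ, if_true, sum_const, card_univ,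
          nsmul_eq_mul]
        rw [← pow_succ', hm]
        ring

namespace SimpleGraph

variable {V : Type*} [Fintype V] [DecidableEq V]

theorem prod_edgeSet_top_eq_mul {M : Type*} [CommMonoid M] (f : (⊤ : SimpleGraph V).edgeSet → M)
    (v : V) : ∏ e, f e = (∏ e : {e : (⊤ : SimpleGraph V).edgeSet // v ∉ (e : Sym2 V)}, f e) *
      ∏ j : {j // j ≠ v}, f ⟨s(v, j), by simpa using j.2.symm⟩ := by
  rw [← Fintype.prod_subtype_mul_prod_subtype
    (fun e : (⊤ : SimpleGraph V).edgeSet => v ∉ (e : Sym2 V))]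
  congr 1
  refine (Fintype.prod_bijective (fun j : {j // j ≠ v} => (⟨⟨s(v, j), by simpa using j.2.symm⟩,
    by simp⟩ : {e : (⊤ : SimpleGraph V).edgeSet // ¬v ∉ (e : Sym2 V)})) ?_ _ _ fun _ => rfl).symm
  constructor
  · intro j j' h
    simp only [Subtype.mk.injEq, Sym2.congr_right] at h
    exact Subtype.ext h
  · rintro ⟨⟨e, he⟩, hv⟩
    rw [not_not] at hv
    refine ⟨⟨Sym2.Mem.other hv, Sym2.other_ne (by simpa using he) hv⟩, ?_⟩
    simp

noncomputable def edgeCharSum (κ : (⊤ : SimpleGraph V).edgeSet → MulChar F ℂ)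
    (hκ : ∀ e, κ e (-1) = 1) : ℂ :=
  ∑ x : V → F, ∏ e, (κ e).sym2Sub (hκ e) ((e : Sym2 V).map x)

/-- Isolating a vertex `v` of a nontrivial pair, the sum becomes
`∑ u, B u * ∑ z, ∏ j, κ' j (z - u j)` over placements `u` of the other vertices, with `‖B u‖ ≤ 1`;
then Cauchy–Schwarz and `sum_norm_sq_sum_prod_le` apply. -/
theorem card_mul_norm_sq_edgeCharSum_le (κ : (⊤ : SimpleGraph V).edgeSet → MulChar F ℂ)
    (hκ : ∀ e, κ e (-1) = 1) {e₀ : (⊤ : SimpleGraph V).edgeSet} (he₀ : κ e₀ ≠ 1) :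
    Fintype.card F * ‖edgeCharSum κ hκ‖ ^ 2 ≤ 2 * (Fintype.card F : ℝ) ^ (2 * Fintype.card V) := by
  obtain ⟨e₀, he₀mem⟩ := e₀
  induction e₀ using Sym2.ind with | _ v w => ?_
  have hvw : w ≠ v := fun h => by simp [h] at he₀mem
  set κ' : {j // j ≠ v} → MulChar F ℂ := fun j => κ ⟨s(v, j), by simpa using j.2.symm⟩
  set B : ({j // j ≠ v} → F) → ℂ := fun u =>
    ∏ e : {e : (⊤ : SimpleGraph V).edgeSet // v ∉ (e : Sym2 V)},
      (κ e).sym2Sub (hκ e) ((e : Sym2 V).map ((Equiv.funSplitAt v F).symm (0, u)))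
  have hsplit : edgeCharSum κ hκ = ∑ u, B u * ∑ z, ∏ j, κ' j (z - u j) := by
    rw [edgeCharSum, ← Equiv.sum_comp (Equiv.funSplitAt v F).symm, Fintype.sum_prod_type_right]
    refine sum_congr rfl fun u _ => ?_
    rw [mul_sum]
    refine sum_congr rfl fun z _ => ?_
    rw [prod_edgeSet_top_eq_mul _ v]
    congr 1
    · refine prod_congr rfl fun e _ => congrArg _ (Sym2.map_congr fun a ha => ?_)
      have hav : a ≠ v := fun h => e.2 (h ▸ ha)
      simp [hav]
    · refine prod_congr rfl fun j _ => ?_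
      simp [κ', j.2]
  have hB : ∀ u, ‖B u‖ ≤ 1 := fun u => by
    rw [norm_prod]
    exact prod_le_one (fun _ _ => norm_nonneg _) fun e _ => MulChar.norm_sym2Sub_le_one _ _ _
  have hcard : Fintype.card {j // j ≠ v} + 1 = Fintype.card V := by
    rw [Fintype.card_subtype_compl, Fintype.card_subtype_eq]
    exact Nat.sub_add_cancel (Fintype.card_pos_iff.mpr ⟨v⟩)
  calc (Fintype.card F : ℝ) * ‖edgeCharSum κ hκ‖ ^ 2
      ≤ Fintype.card F * (Fintype.card F ^ Fintype.card {j // j ≠ v} *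
          (2 * Fintype.card F ^ (Fintype.card {j // j ≠ v} + 1))) := by
        rw [hsplit]
        gcongr
        refine (norm_sum_mul_sq_le _ _ hB).trans ?_
        rw [Fintype.card_fun, Nat.cast_pow]
        gcongr
        exact sum_norm_sq_sum_prod_le κ' (j₀ := ⟨w, hvw⟩) he₀
    _ = 2 * (Fintype.card F : ℝ) ^ (2 * Fintype.card V) := by
        rw [← hcard]
        ring

theorem edgeCharSum_eq_descFactorial (κ : (⊤ : SimpleGraph V).edgeSet → MulChar F ℂ)
    (hκ : ∀ e, κ e (-1) = 1) (hκ₁ : ∀ e, κ e = 1) :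
    edgeCharSum κ hκ = (Fintype.card F).descFactorial (Fintype.card V) := by
  classical
  have hfactor : ∀ (x : V → F) (e : (⊤ : SimpleGraph V).edgeSet),
      (κ e).sym2Sub (hκ e) ((e : Sym2 V).map x) =
        if ¬((e : Sym2 V).map x).IsDiag then 1 else 0 := by
    rintro x ⟨e, -⟩
    induction e using Sym2.ind with | _ a b => ?_
    simp only [Sym2.map_mk, MulChar.sym2Sub_mk, Sym2.mk_isDiag_iff, hκ₁]
    by_cases hab : x a = x b
    · simp [hab, MulChar.map_zero]
    · simp [hab, MulChar.one_apply (sub_ne_zero.mpr hab).isUnit]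
  have hinj : ∀ x : V → F,
      (∀ e ∈ (univ : Finset (⊤ : SimpleGraph V).edgeSet), ¬((e : Sym2 V).map x).IsDiag) ↔
        Function.Injective x := by
    refine fun x => ⟨fun h a b hab => by_contra fun hne => ?_, fun h e _ => ?_⟩
    · exact h ⟨s(a, b), by simpa using hne⟩ (mem_univ _) (by simpa using hab)
    · obtain ⟨e, he⟩ := e
      induction e using Sym2.ind with | _ a b => ?_
      simpa [h.eq_iff] using he
  simp_rw [edgeCharSum, hfactor, prod_boole, hinj, sum_boole, ← Fintype.card_subtype,
    Fintype.card_congr (Equiv.subtypeInjectiveEquivEmbedding V F), Fintype.card_embedding_eq]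

theorem natCast_pow_mul_card_eq_sum {χ : MulChar F ℂ} {p : ℕ} (hχp : χ ^ p = 1) (hp : p ≠ 0)
    (hχ : χ (-1) = 1) {w : (⊤ : SimpleGraph V).edgeSet → ℂ} (hw : ∀ e, w e ^ p = 1) :
    (p : ℂ) ^ Fintype.card (⊤ : SimpleGraph V).edgeSet *
        Nat.card {x : V → F // ∀ e : (⊤ : SimpleGraph V).edgeSet,
          χ.sym2Sub hχ ((e : Sym2 V).map x) = w e} =
      ∑ K : (⊤ : SimpleGraph V).edgeSet → Fin p, (∏ e, (w e)⁻¹ ^ (K e : ℕ)) *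
        edgeCharSum (fun e => χ ^ (K e : ℕ)) (fun _ => χ.pow_apply_neg_one hχ _) := by
  classical
  have hind : ∀ (e : (⊤ : SimpleGraph V).edgeSet) (s : Sym2 F),
      (p : ℂ) * (if χ.sym2Sub hχ s = w e then 1 else 0) =
        ∑ k : Fin p, (w e)⁻¹ ^ (k : ℕ) * (χ ^ (k : ℕ)).sym2Sub (χ.pow_apply_neg_one hχ _) s := by
    intro e s
    induction s using Sym2.ind with | _ a b => ?_
    exact MulChar.natCast_mul_ite_eq_sum_pow hχp hp (hw e) (a - b)
  have hcount : (Nat.card {x : V → F // ∀ e : (⊤ : SimpleGraph V).edgeSet,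
      χ.sym2Sub hχ ((e : Sym2 V).map x) = w e} : ℂ) =
        ∑ x : V → F, ∏ e : (⊤ : SimpleGraph V).edgeSet,
          if χ.sym2Sub hχ ((e : Sym2 V).map x) = w e then 1 else 0 := by
    rw [Nat.card_eq_fintype_card, Fintype.card_subtype, card_filter]
    simp [prod_boole]
  rw [hcount, mul_sum, ← card_univ]
  simp_rw [← prod_const, ← prod_mul_distrib, hind, Fintype.prod_sum]
  rw [sum_comm]
  simp_rw [edgeCharSum, mul_sum, ← prod_mul_distrib]

theorem natCast_pow_mul_norm_edgeCharSum_lt {χ : MulChar F ℂ} {p : ℕ} [NeZero p]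
    (hχp : orderOf χ = p) (hχ : χ (-1) = 1) (hn : 2 * Fintype.card V ≤ Fintype.card F)
    (hq : 2 * 4 ^ Fintype.card V * p ^ (2 * Fintype.card (⊤ : SimpleGraph V).edgeSet) <
      Fintype.card F)
    {K : (⊤ : SimpleGraph V).edgeSet → Fin p} (hK : K ≠ 0) :
    (p : ℝ) ^ Fintype.card (⊤ : SimpleGraph V).edgeSet *
        ‖edgeCharSum (fun e => χ ^ (K e : ℕ)) (fun _ => χ.pow_apply_neg_one hχ _)‖ <
      ((Fintype.card F - Fintype.card V : ℕ) : ℝ) ^ Fintype.card V := by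
  set q := Fintype.card F
  set n := Fintype.card V
  set m := Fintype.card (⊤ : SimpleGraph V).edgeSet
  obtain ⟨e, he⟩ := Function.ne_iff.mp hK
  have hKe : χ ^ (K e : ℕ) ≠ 1 :=
    pow_ne_one_of_lt_orderOf (Fin.val_ne_zero_iff.mpr he) (hχp ▸ (K e).isLt)
  have hbound := card_mul_norm_sq_edgeCharSum_le (fun e => χ ^ (K e : ℕ))
    (fun _ => χ.pow_apply_neg_one hχ _) hKe
  have hnum : (2 * p ^ (2 * m) * q ^ (2 * n) : ℝ) < q * ((q - n : ℕ) : ℝ) ^ (2 * n) := by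
    exact_mod_cast two_mul_mul_pow_lt hn hq
  refine lt_of_pow_lt_pow_left₀ 2 (by positivity) (lt_of_mul_lt_mul_left ?_ (Nat.cast_nonneg q))
  calc (q : ℝ) * ((p : ℝ) ^ m * ‖edgeCharSum _ _‖) ^ 2
      = (p : ℝ) ^ (2 * m) * (q * ‖edgeCharSum _ _‖ ^ 2) := by ring
    _ ≤ (p : ℝ) ^ (2 * m) * (2 * (q : ℝ) ^ (2 * n)) := by gcongr
    _ < q * (((q - n : ℕ) : ℝ) ^ n) ^ 2 := by rw [← pow_mul, mul_comm n 2]; linarith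

/-- Expanding the indicators over powers of `χ`, the trivial pattern `K = 0` counts the injective
placements, at least `(q - n) ^ n` with `q = |F|`, `n = |V|`, and each of the fewer than `p ^ m`
other patterns (`m` the number of pairs) contributes less than `(q - n) ^ n / p ^ m`. -/
theorem exists_sym2Sub_eq {χ : MulChar F ℂ} {p : ℕ} (hχp : orderOf χ = p) (hχ : χ (-1) = 1)
    {w : (⊤ : SimpleGraph V).edgeSet → ℂ} (hw : ∀ e, w e ^ p = 1)
    (hn : 2 * Fintype.card V ≤ Fintype.card F)
    (hq : 2 * 4 ^ Fintype.card V * p ^ (2 * Fintype.card (⊤ : SimpleGraph V).edgeSet) <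
      Fintype.card F) :
    ∃ x : V → F, ∀ e : (⊤ : SimpleGraph V).edgeSet, χ.sym2Sub hχ ((e : Sym2 V).map x) = w e := by
  classical
  have hp : p ≠ 0 := hχp ▸ χ.orderOf_pos.ne'
  have : NeZero p := ⟨hp⟩
  set q := Fintype.card F
  set n := Fintype.card V
  set m := Fintype.card (⊤ : SimpleGraph V).edgeSet
  set A : ((⊤ : SimpleGraph V).edgeSet → Fin p) → ℂ :=
    fun K => edgeCharSum (fun e => χ ^ (K e : ℕ)) (fun _ => χ.pow_apply_neg_one hχ _)
  set c : ((⊤ : SimpleGraph V).edgeSet → Fin p) → ℂ := fun K => ∏ e, (w e)⁻¹ ^ (K e : ℕ)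
  set S := univ.erase (0 : (⊤ : SimpleGraph V).edgeSet → Fin p)
  have hexp := natCast_pow_mul_card_eq_sum (hχp ▸ pow_orderOf_eq_one χ) hp hχ hw
  have hA0 : A 0 = q.descFactorial n := edgeCharSum_eq_descFactorial _ _ fun e => by simp
  have hdesc : ((q - n : ℕ) : ℝ) ^ n ≤ q.descFactorial n := by
    exact_mod_cast (Nat.pow_le_pow_left (by omega) n).trans (Nat.pow_sub_le_descFactorial q n)
  have hcard : (S.card : ℝ) < (p : ℝ) ^ m := by
    have := card_erase_lt_of_mem (mem_univ (0 : (⊤ : SimpleGraph V).edgeSet → Fin p))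
    rw [card_univ, Fintype.card_fun, Fintype.card_fin] at this
    exact_mod_cast this
  have herr : ∑ K ∈ S, ‖A K‖ < ((q - n : ℕ) : ℝ) ^ n := by
    refine lt_of_mul_lt_mul_left ?_ (by positivity : (0 : ℝ) ≤ (p : ℝ) ^ m)
    calc (p : ℝ) ^ m * ∑ K ∈ S, ‖A K‖ ≤ S.card * ((q - n : ℕ) : ℝ) ^ n := by
          rw [mul_sum, ← nsmul_eq_mul, ← sum_const]
          exact sum_le_sum fun K hK =>
            (natCast_pow_mul_norm_edgeCharSum_lt hχp hχ hn hq (ne_of_mem_erase hK)).le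
      _ < (p : ℝ) ^ m * ((q - n : ℕ) : ℝ) ^ n :=
          mul_lt_mul_of_pos_right hcard (pow_pos (Nat.cast_pos.mpr (by omega)) n)
  have hpos : 0 < Nat.card {x : V → F // ∀ e : (⊤ : SimpleGraph V).edgeSet,
      χ.sym2Sub hχ ((e : Sym2 V).map x) = w e} := by
    refine Nat.pos_of_ne_zero fun hN => ?_
    rw [hN, Nat.cast_zero, mul_zero, ← add_sum_erase _ _ (mem_univ 0)] at hexp
    have hmain : (q.descFactorial n : ℝ) ≤ ∑ K ∈ S, ‖A K‖ :=
      calc (q.descFactorial n : ℝ) = ‖c 0 * A 0‖ := by simp [c, hA0]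
        _ = ‖∑ K ∈ S, c K * A K‖ := by rw [eq_neg_of_add_eq_zero_left hexp.symm, norm_neg]
        _ ≤ ∑ K ∈ S, ‖A K‖ := (norm_sum_le _ _).trans_eq <| sum_congr rfl fun K _ => by
          simp [c, norm_prod, Complex.norm_eq_one_of_pow_eq_one (hw _) hp]
    linarith
  obtain ⟨⟨x, hx⟩⟩ := (Nat.card_pos_iff.mp hpos).1
  exact ⟨x, hx⟩

end SimpleGraph

end

theorem nonempty_embedding_pUnitaryCayley {F : Type*} [Field F] [Fintype F] {V : Type*}
    [Fintype V] [DecidableEq V] (G : SimpleGraph V) {p : ℕ} (hp : 1 < p)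
    (hdvd : p ∣ Fintype.card F - 1) (hneg : ∃ u : Fˣ, (u : F) ^ p = -1)
    (hn : 2 * Fintype.card V ≤ Fintype.card F)
    (hq : 2 * 4 ^ Fintype.card V * p ^ (2 * Fintype.card (⊤ : SimpleGraph V).edgeSet) <
      Fintype.card F) :
    Nonempty (G ↪g pUnitaryCayley F p) := by
  classical
  obtain ⟨χ, hχp⟩ :=
    MulChar.exists_mulChar_orderOf F hdvd (Complex.isPrimitiveRoot_exp p (by omega))
  have hker := MulChar.exists_eq_pow_iff_apply_eq_one hχp
  have hχ : χ (-1) = 1 := by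
    obtain ⟨u, hu⟩ := hneg
    exact (hker _).mp ⟨u, hu.symm⟩
  obtain ⟨g, hg⟩ := MulChar.ne_one_iff.mp fun h : χ = 1 => by simp [h] at hχp; omega
  have hg0 : χ g ≠ 0 := MulChar.apply_ne_zero_iff.mpr g.isUnit
  obtain ⟨x, hx⟩ := SimpleGraph.exists_sym2Sub_eq hχp hχ
    (w := fun e : (⊤ : SimpleGraph V).edgeSet => if (e : Sym2 V) ∈ G.edgeSet then 1 else χ g)
    (fun e => by split_ifs <;> simp [← MulChar.pow_apply_coe, ← hχp, pow_orderOf_eq_one]) hn hq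
  have hxab : ∀ a b, a ≠ b → χ (x a - x b) = if G.Adj a b then 1 else χ g := fun a b hab => by
    simpa using hx ⟨s(a, b), by simpa using hab⟩
  have hinj : Function.Injective x := fun a b hab => by
    by_contra hne
    have h0 := hxab a b hne
    rw [hab, sub_self, MulChar.map_zero] at h0
    split_ifs at h0
    exacts [zero_ne_one h0, hg0 h0.symm]
  refine ⟨⟨⟨x, hinj⟩, fun {a b} => ?_⟩⟩
  simp only [Function.Embedding.coeFn_mk]
  rw [pUnitaryCayley_adj_iff hneg]
  rcases eq_or_ne a b with rfl | hab
  · simp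
  · rw [hker, hxab a b hab]
    split_ifs with h <;> simp [h, hinj.ne hab, hg]

theorem stmt_5 (p : ℕ) (hp : p.Prime) (V : Type*) [Fintype V] (G : SimpleGraph V) :
    ∃ C : ℕ, ∀ ℓ : ℕ, ℓ.Prime → C < ℓ → p ∣ ℓ - 1 →
      (∃ u : (ZMod ℓ)ˣ, (u : ZMod ℓ) ^ p = -1) →
      Nonempty (G ↪g pUnitaryCayley (ZMod ℓ) p) := by
  classical
  refine ⟨2 * 4 ^ Fintype.card V * p ^ (2 * Fintype.card (⊤ : SimpleGraph V).edgeSet) +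
    2 * Fintype.card V, fun ℓ hℓ hC hdvd hneg => ?_⟩
  have : Fact ℓ.Prime := ⟨hℓ⟩
  exact nonempty_embedding_pUnitaryCayley G hp.one_lt (by rwa [ZMod.card]) hneg
    (by rw [ZMod.card]; omega) (by rw [ZMod.card]; omega)
end

section
/- Let p be a prime and let R be a finite commutative local ring with maximal ideal M whose residue field R/M has characteristic p. If the Cayley graph on R with connection set (R^×)^p (distinct a, b adjacent iff a − b ∈ (R^×)^p) is connected, then M = pR (equivalently, M is the ideal generated by p), and R/pR is a finite field. -/
open Function

theorem sub_mem_closure_pow_units_of_reachable {R : Type*} [CommRing R] {p : ℕ} {a b : R}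
    (h : (pUnitaryCayley R p).Reachable a b) :
    a - b ∈ AddSubgroup.closure (Set.range fun u : Rˣ => (u : R) ^ p) := by
  set S := AddSubgroup.closure (Set.range fun u : Rˣ => (u : R) ^ p)
  obtain ⟨w⟩ := h
  induction w with
  | nil => simp
  | @cons a b c hab _ ih =>
    rw [← sub_add_sub_cancel a b c]
    refine S.add_mem ?_ ih
    rcases ((SimpleGraph.fromRel_adj _ _ _).1 hab).2 with ⟨u, hu⟩ | ⟨u, hu⟩
    · exact hu ▸ AddSubgroup.subset_closure ⟨u, rfl⟩
    · rw [← neg_sub, hu]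
      exact S.neg_mem (AddSubgroup.subset_closure ⟨u, rfl⟩)

theorem closure_pow_units_eq_top_of_connected {R : Type*} [CommRing R] {p : ℕ}
    (h : (pUnitaryCayley R p).Connected) :
    AddSubgroup.closure (Set.range fun u : Rˣ => (u : R) ^ p) = ⊤ :=
  eq_top_iff.2 fun x _ => by
    simpa using sub_mem_closure_pow_units_of_reachable (h.preconnected x 0)

theorem frobenius_surjective_of_closure_pow_units_eq_top {R A : Type*} [CommRing R]
    [CommRing A] (f : R →+* A) (hf : Surjective f) (p : ℕ) [ExpChar A p]
    (h : AddSubgroup.closure (Set.range fun u : Rˣ => (u : R) ^ p) = ⊤) :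
    Surjective (frobenius A p) := by
  have hle : AddSubgroup.closure (Set.range fun u : Rˣ => (u : R) ^ p) ≤
      (frobenius A p).range.toAddSubgroup.comap f.toAddMonoidHom := by
    rw [AddSubgroup.closure_le]
    rintro _ ⟨u, rfl⟩
    exact ⟨f u, by simp [frobenius_def]⟩
  intro a
  obtain ⟨x, rfl⟩ := hf a
  exact hle (h ▸ AddSubgroup.mem_top x)

theorem isReduced_of_injective_frobenius {A : Type*} [CommRing A] {p : ℕ} [ExpChar A p]
    (hp : 1 < p) (h : Injective (frobenius A p)) : IsReduced A :=
  (isReduced_iff_pow_one_lt p hp).2 fun x hx => h (by rwa [frobenius_def, map_zero])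

theorem isField_of_surjective_frobenius {A : Type*} [CommRing A] [IsLocalRing A] [Finite A]
    {p : ℕ} [Fact p.Prime] [CharP A p] (h : Surjective (frobenius A p)) : IsField A :=
  have : IsReduced A := isReduced_of_injective_frobenius (Fact.out : p.Prime).one_lt
    (Finite.injective_iff_surjective.2 h)
  IsArtinianRing.isField_of_isReduced_of_isLocalRing A

theorem stmt_7 (p : ℕ) (hp : p.Prime) (R : Type*) [CommRing R] [IsLocalRing R] [Fintype R]
    (hchar : CharP (IsLocalRing.ResidueField R) p)
    (hconn : (pUnitaryCayley R p).Connected) :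
    IsLocalRing.maximalIdeal R = Ideal.span {(p : R)} ∧
      IsField (R ⧸ Ideal.span {(p : R)}) := by
  have : Fact p.Prime := ⟨hp⟩
  have hpM : (p : R) ∈ IsLocalRing.maximalIdeal R := by
    rw [← IsLocalRing.residue_eq_zero_iff, map_natCast, CharP.cast_eq_zero]
  have : CharP (R ⧸ Ideal.span {(p : R)}) p := CharP.quotient R p hpM
  have : Nontrivial (R ⧸ Ideal.span {(p : R)}) := CharP.nontrivial_of_char_ne_one hp.ne_one
  have : IsLocalRing (R ⧸ Ideal.span {(p : R)}) :=
    IsLocalRing.of_surjective' _ Ideal.Quotient.mk_surjective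
  have hfield : IsField (R ⧸ Ideal.span {(p : R)}) :=
    isField_of_surjective_frobenius <| frobenius_surjective_of_closure_pow_units_eq_top _
      Ideal.Quotient.mk_surjective p (closure_pow_units_eq_top_of_connected hconn)
  exact ⟨(IsLocalRing.eq_maximalIdeal (Ideal.Quotient.maximal_of_isField _ hfield)).symm, hfield⟩
end

section
/- Let p be a prime and let R be a finite commutative local ring with maximal ideal M whose residue field has characteristic p, with -1 ∈ (R^×)^p. Then the p-unitary Cayley graph G_R(p) is connected if and only if M = pR. Moreover, if p = 2, then G_R(2) is connected if and only if R is a field, in which case G_R(2) is the complete graph on |R| vertices. -/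
/-!
A walk in `pUnitaryCayley R p` moves by `± uᵖ` with `u` a unit, so the graph is connected iff
these elements generate `(R, +)`. Since `-1` is a `p`-th power and `(a + b)ᵖ ≡ aᵖ + bᵖ mod p`,
every element of that subgroup has the form `zᵖ + p c`; if this is all of `R`, then
`M ≤ M² ⊔ (p)` and Nakayama gives `M = (p)`. Conversely, the residue field is finite, hence
perfect, so every element is a `p`-th power of a unit modulo `M = (p)`; successive approximation
modulo `pᵏ` reaches all of `R` because `p ∈ M` is nilpotent.

For `p = 2`, `u² = -1` gives `(u - 1)² = -2u`, so `u - 1 ∈ M` and then `2 ∈ M²`, whence `M = 0`.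
In a finite field of characteristic `p` every element is a `p`-th power, so the graph is complete.
-/

namespace IsLocalRing

variable {R : Type*} [CommRing R] [IsLocalRing R]

lemma natCast_mem_maximalIdeal (p : ℕ) [CharP (ResidueField R) p] : (p : R) ∈ maximalIdeal R :=
  (residue_eq_zero_iff _).mp (by rw [map_natCast]; exact CharP.cast_eq_zero _ p)

lemma maximalIdeal_le_of_le_sq_sup [IsNoetherianRing R] {I : Ideal R}
    (h : maximalIdeal R ≤ maximalIdeal R ^ 2 ⊔ I) : maximalIdeal R ≤ I :=
  Submodule.le_of_le_smul_of_le_jacobson_bot (IsNoetherian.noetherian _)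
    (maximalIdeal_le_jacobson ⊥) (by rwa [sup_comm, Ideal.smul_eq_mul, ← sq])

end IsLocalRing

open IsLocalRing

namespace pUnitaryCayley

variable {R : Type*} [CommRing R] {p : ℕ}

def unitPowClosure (R : Type*) [CommRing R] (p : ℕ) : AddSubgroup R :=
  AddSubgroup.closure (Set.range fun u : Rˣ => (u : R) ^ p)

lemma adj_iff {a b : R} :
    (pUnitaryCayley R p).Adj a b ↔
      a ≠ b ∧ ((∃ u : Rˣ, a - b = (u : R) ^ p) ∨ ∃ u : Rˣ, b - a = (u : R) ^ p) := by
  simp [pUnitaryCayley]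

lemma reachable_add_unit_pow (u : Rˣ) (a : R) :
    (pUnitaryCayley R p).Reachable a ((u : R) ^ p + a) := by
  by_cases h : a = (u : R) ^ p + a
  · rw [← h]
  · exact (adj_iff.mpr ⟨h, .inr ⟨u, by ring⟩⟩).reachable

lemma sub_mem_unitPowClosure_of_reachable {a b : R} (h : (pUnitaryCayley R p).Reachable a b) :
    a - b ∈ unitPowClosure R p := by
  rw [SimpleGraph.reachable_iff_reflTransGen] at h
  induction h with
  | refl => simp
  | @tail b c _ hbc ih =>
    have hbc : b - c ∈ unitPowClosure R p := by
      rcases (adj_iff.mp hbc).2 with ⟨u, hu⟩ | ⟨u, hu⟩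
      · exact hu ▸ AddSubgroup.subset_closure ⟨u, rfl⟩
      · rw [← neg_sub, hu]
        exact neg_mem (AddSubgroup.subset_closure ⟨u, rfl⟩)
    simpa using (unitPowClosure R p).add_mem ih hbc

lemma reachable_zero_of_mem_unitPowClosure {x : R} (hx : x ∈ unitPowClosure R p) :
    (pUnitaryCayley R p).Reachable 0 x := by
  induction hx using AddSubgroup.closure_induction_left with
  | zero => rfl
  | add_left _ hs y _ ih =>
    obtain ⟨u, rfl⟩ := hs
    exact ih.trans (reachable_add_unit_pow u y)
  | neg_add_cancel _ hs y _ ih =>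
    obtain ⟨u, rfl⟩ := hs
    have h := reachable_add_unit_pow (p := p) u (-((u : R) ^ p) + y)
    rw [add_neg_cancel_left] at h
    exact ih.trans h.symm

theorem connected_iff : (pUnitaryCayley R p).Connected ↔ unitPowClosure R p = ⊤ := by
  refine ⟨fun h => ?_, fun h => ?_⟩
  · rw [eq_top_iff]
    intro x _
    simpa using sub_mem_unitPowClosure_of_reachable (h.preconnected x 0)
  · have hzero (x : R) : (pUnitaryCayley R p).Reachable 0 x :=
      reachable_zero_of_mem_unitPowClosure (by simp [h])
    exact .mk fun a b => (hzero a).symm.trans (hzero b)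

lemma exists_eq_pow_add_mul_of_mem_unitPowClosure (hp : p.Prime)
    (hneg : ∃ u : Rˣ, (u : R) ^ p = -1) {x : R} (hx : x ∈ unitPowClosure R p) :
    ∃ z c : R, x = z ^ p + p * c := by
  induction hx using AddSubgroup.closure_induction with
  | mem _ hy => obtain ⟨u, rfl⟩ := hy; exact ⟨u, 0, by ring⟩
  | zero => exact ⟨0, 0, by simp [zero_pow hp.ne_zero]⟩
  | add _ _ _ _ ihy ihz =>
    obtain ⟨a, c, rfl⟩ := ihy
    obtain ⟨b, d, rfl⟩ := ihz
    obtain ⟨r, hr⟩ := exists_add_pow_prime_eq hp a b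
    exact ⟨a + b, c + d - a * b * r, by rw [hr]; ring⟩
  | neg _ _ ih =>
    obtain ⟨a, c, rfl⟩ := ih
    obtain ⟨v, hv⟩ := hneg
    exact ⟨v * a, -c, by rw [mul_pow, hv]; ring⟩

section IsLocalRing

variable [IsLocalRing R]

lemma maximalIdeal_eq_span_of_unitPowClosure_eq_top [IsNoetherianRing R] (hp : p.Prime)
    [CharP (ResidueField R) p] (hneg : ∃ u : Rˣ, (u : R) ^ p = -1)
    (h : unitPowClosure R p = ⊤) : maximalIdeal R = Ideal.span {(p : R)} := by
  refine le_antisymm (maximalIdeal_le_of_le_sq_sup fun m hm => ?_) ?_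
  · obtain ⟨z, c, rfl⟩ :=
      exists_eq_pow_add_mul_of_mem_unitPowClosure hp hneg (h ▸ AddSubgroup.mem_top m)
    have hpc : (p : R) * c ∈ maximalIdeal R := Ideal.mul_mem_right _ _ (natCast_mem_maximalIdeal p)
    have hz : z ∈ maximalIdeal R :=
      (maximalIdeal.isMaximal R).isPrime.mem_of_pow_mem p (by simpa using sub_mem hm hpc)
    refine Ideal.add_mem _ (Ideal.mem_sup_left ?_) (Ideal.mem_sup_right ?_)
    · exact Ideal.pow_le_pow_right hp.two_le (Ideal.pow_mem_pow hz p)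
    · exact Ideal.mul_mem_right _ _ (Ideal.mem_span_singleton_self _)
  · rw [Ideal.span_le, Set.singleton_subset_iff]
    exact natCast_mem_maximalIdeal p

lemma exists_sub_mem_maximalIdeal [Finite R] [Fact p.Prime] [CharP (ResidueField R) p] (x : R) :
    ∃ s ∈ unitPowClosure R p, x - s ∈ maximalIdeal R := by
  have : Finite (ResidueField R) := .of_surjective _ residue_surjective
  obtain ⟨z, hz⟩ := surjective_frobenius (ResidueField R) p (residue R x)
  obtain ⟨y, rfl⟩ := residue_surjective z
  have hxy : x - y ^ p ∈ maximalIdeal R := by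
    rw [← residue_eq_zero_iff, map_sub, map_pow, ← frobenius_def, hz, sub_self]
  by_cases hy : IsUnit y
  · exact ⟨y ^ p, AddSubgroup.subset_closure ⟨hy.unit, rfl⟩, hxy⟩
  · have hyp : y ^ p ∈ maximalIdeal R := Ideal.pow_mem_of_mem _ hy p (Fact.out : p.Prime).pos
    exact ⟨0, zero_mem _, by simpa using add_mem hxy hyp⟩

lemma exists_mem_unitPowClosure_add_pow_mul [Finite R] [Fact p.Prime] [CharP (ResidueField R) p]
    (hM : maximalIdeal R = Ideal.span {(p : R)}) (k : ℕ) (x : R) :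
    ∃ s ∈ unitPowClosure R p, ∃ y, x = s + p ^ k * y := by
  induction k generalizing x with
  | zero => exact ⟨0, zero_mem _, x, by simp⟩
  | succ k ih =>
    obtain ⟨s, hs, y, rfl⟩ := ih x
    obtain ⟨s', hs', hys'⟩ := exists_sub_mem_maximalIdeal (p := p) y
    obtain ⟨t, ht⟩ := Ideal.mem_span_singleton'.mp (hM ▸ hys')
    refine ⟨s + p ^ k • s', add_mem hs (nsmul_mem hs' _), t, ?_⟩
    rw [nsmul_eq_mul]
    push_cast
    linear_combination -(p : R) ^ k * ht

lemma unitPowClosure_eq_top_of_maximalIdeal_eq_span [Finite R] [Fact p.Prime]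
    [CharP (ResidueField R) p] (hM : maximalIdeal R = Ideal.span {(p : R)}) :
    unitPowClosure R p = ⊤ := by
  obtain ⟨n, hn⟩ := Ring.KrullDimLE.isNilpotent_iff_mem_maximalIdeal.mpr
    (natCast_mem_maximalIdeal (R := R) p)
  refine eq_top_iff.mpr fun x _ => ?_
  obtain ⟨s, hs, y, rfl⟩ := exists_mem_unitPowClosure_add_pow_mul hM n x
  simpa [hn] using hs

lemma maximalIdeal_eq_bot_of_eq_span_two [IsNoetherianRing R]
    (hneg : ∃ u : Rˣ, (u : R) ^ 2 = -1) (hM : maximalIdeal R = Ideal.span {(2 : R)}) :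
    maximalIdeal R = ⊥ := by
  obtain ⟨u, hu⟩ := hneg
  have h2 : (2 : R) ∈ maximalIdeal R := hM ▸ Ideal.mem_span_singleton_self _
  have hsq : ((u : R) - 1) ^ 2 = -(2 * u) := by linear_combination hu
  have hu1 : (u : R) - 1 ∈ maximalIdeal R :=
    (maximalIdeal.isMaximal R).isPrime.mem_of_pow_mem 2
      (hsq ▸ neg_mem (Ideal.mul_mem_right _ _ h2))
  have h2sq : (2 : R) ∈ maximalIdeal R ^ 2 := by
    have h : (2 : R) = ((u : R) - 1) ^ 2 * -↑u⁻¹ := by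
      linear_combination (↑u⁻¹ : R) * hsq - 2 * u.mul_inv
    exact h ▸ Ideal.mul_mem_right _ _ (Ideal.pow_mem_pow hu1 2)
  refine le_bot_iff.mp (maximalIdeal_le_of_le_sq_sup ?_)
  rw [sup_bot_eq]
  exact hM.le.trans (Ideal.span_le.mpr (Set.singleton_subset_iff.mpr h2sq))

end IsLocalRing

theorem eq_top_of_finite_field {K : Type*} [Field K] [Finite K] [Fact p.Prime] [CharP K p] :
    pUnitaryCayley K p = ⊤ := by
  ext a b
  refine ⟨fun h => (adj_iff.mp h).1, fun hab => adj_iff.mpr ⟨hab, .inl ?_⟩⟩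
  obtain ⟨c, hc⟩ := surjective_frobenius K p (a - b)
  rw [frobenius_def] at hc
  have hc0 : c ≠ 0 := by
    rintro rfl
    exact hab (sub_eq_zero.mp (by simpa [(Fact.out : p.Prime).ne_zero] using hc.symm))
  exact ⟨Units.mk0 c hc0, hc.symm⟩

end pUnitaryCayley

theorem stmt_10 (p : ℕ) (hp : p.Prime) (R : Type*) [CommRing R] [IsLocalRing R] [Fintype R]
    (hchar : CharP (IsLocalRing.ResidueField R) p)
    (hneg : ∃ u : Rˣ, (u : R) ^ p = -1) :
    ((pUnitaryCayley R p).Connected ↔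
        IsLocalRing.maximalIdeal R = Ideal.span {(p : R)}) ∧
      (p = 2 →
        ((pUnitaryCayley R p).Connected ↔ IsField R) ∧
          ((pUnitaryCayley R p).Connected → pUnitaryCayley R p = ⊤)) := by
  have : Fact p.Prime := ⟨hp⟩
  have hconn : (pUnitaryCayley R p).Connected ↔ maximalIdeal R = Ideal.span {(p : R)} :=
    pUnitaryCayley.connected_iff.trans
      ⟨pUnitaryCayley.maximalIdeal_eq_span_of_unitPowClosure_eq_top hp hneg,
        pUnitaryCayley.unitPowClosure_eq_top_of_maximalIdeal_eq_span⟩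
  refine ⟨hconn, ?_⟩
  rintro rfl
  have h2 : (2 : R) ∈ maximalIdeal R := by
    exact_mod_cast natCast_mem_maximalIdeal 2
  have hfield : (pUnitaryCayley R 2).Connected ↔ IsField R := by
    rw [hconn, isField_iff_maximalIdeal_eq, Nat.cast_ofNat]
    refine ⟨pUnitaryCayley.maximalIdeal_eq_bot_of_eq_span_two hneg, fun hM => ?_⟩
    rw [hM, eq_comm, Ideal.span_singleton_eq_bot, ← Ideal.mem_bot, ← hM]
    exact h2
  refine ⟨hfield, fun hc => ?_⟩
  have hM : maximalIdeal R = ⊥ := isField_iff_maximalIdeal_eq.mp (hfield.mp hc)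
  let := (hfield.mp hc).toField
  have : CharP R 2 := (CharP.charP_iff_prime_eq_zero Nat.prime_two).mpr (by simpa [hM] using h2)
  exact pUnitaryCayley.eq_top_of_finite_field
end

section
/- Let p be a prime and let R be a finite commutative local ring whose residue field has characteristic p, with -1 ∈ (R^×)^p, and suppose the p-unitary Cayley graph G_R(p) is connected. Then the complement of G_R(p) is connected if and only if R is not a field. -/
private lemma one_add_sq_zero_pow {R : Type*} [CommRing R] {t : R} (h : t * t = 0) (n : ℕ) :
    (1 + t) ^ n = 1 + n * t := by
  induction n with
  | zero => simp
  | succ n ih =>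
    rw [pow_succ, ih]
    have : (1 + (n : R) * t) * (1 + t) = 1 + ((n : R) + 1) * t + (n : R) * (t * t) := by ring
    rw [this, h]
    push_cast
    ring

theorem stmt_11 (p : ℕ) (hp : p.Prime) (R : Type*) [CommRing R] [IsLocalRing R] [Fintype R]
    (hchar : CharP (IsLocalRing.ResidueField R) p)
    (hneg : ∃ u : Rˣ, (u : R) ^ p = -1)
    (hconn : (pUnitaryCayley R p).Connected) :
    ((pUnitaryCayley R p)ᶜ.Connected ↔ ¬ IsField R) := by
  classical
  haveI : Fact p.Prime := ⟨hp⟩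
  obtain ⟨w, hw⟩ := hneg
  set G := pUnitaryCayley R p with hGdef
  set m := IsLocalRing.maximalIdeal R with hmdef
  -- adjacency in the complement
  have hadj : ∀ a b : R, Gᶜ.Adj a b ↔
      a ≠ b ∧ ¬ (∃ u : Rˣ, a - b = (u : R) ^ p) ∧ ¬ (∃ u : Rˣ, b - a = (u : R) ^ p) := by
    intro a b
    rw [SimpleGraph.compl_adj, hGdef]
    unfold pUnitaryCayley
    rw [SimpleGraph.fromRel_adj]
    tauto
  haveI := hchar
  constructor
  · -- complement connected → not a field
    intro hc hF
    letI : Field R := hF.toField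
    have hmbot : m = ⊥ := (IsLocalRing.isField_iff_maximalIdeal_eq).mp hF
    have hresinj : Function.Injective (IsLocalRing.residue R) := by
      rw [RingHom.injective_iff_ker_eq_bot, IsLocalRing.ker_residue, ← hmdef, hmbot]
    haveI : CharP R p := (IsLocalRing.residue R).charP hresinj p
    -- the Frobenius map on R is surjective
    have hfrobinj : Function.Injective (fun x : R => x ^ p) := by
      intro x y hxy
      have hxy' : x ^ p = y ^ p := hxy
      have : (x - y) ^ p = 0 := by rw [sub_pow_char, hxy', sub_self]
      have := pow_eq_zero_iff hp.ne_zero |>.mp this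
      exact sub_eq_zero.mp this
    have hfrobsurj : Function.Surjective (fun x : R => x ^ p) :=
      Finite.injective_iff_surjective.mp hfrobinj
    -- the complement has no edges
    have hbot : Gᶜ = ⊥ := by
      ext a b
      simp only [SimpleGraph.bot_adj, iff_false]
      rw [hadj]
      rintro ⟨hne, h1, _⟩
      obtain ⟨x, hx⟩ := hfrobsurj (a - b)
      have hx0 : x ≠ 0 := by
        rintro rfl
        simp only [zero_pow hp.ne_zero] at hx
        exact hne (sub_eq_zero.mp hx.symm)
      exact h1 ⟨(isUnit_iff_ne_zero.mpr hx0).unit, by rw [IsUnit.unit_spec]; exact hx.symm⟩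
    rw [hbot] at hc
    have := SimpleGraph.reachable_bot.mp (hc.preconnected 0 1)
    exact zero_ne_one this
  · -- not a field → complement connected
    intro hF
    have hmne : m ≠ ⊥ := fun h => hF ((IsLocalRing.isField_iff_maximalIdeal_eq).mpr (hmdef ▸ h))
    -- find a nonzero annihilator element of m inside m
    obtain ⟨t₀, ht₀m, ht₀ne, ht₀ann⟩ :
        ∃ t₀ ∈ m, t₀ ≠ 0 ∧ ∀ x ∈ m, t₀ * x = 0 := by
      obtain ⟨n, hn⟩ := IsArtinianRing.isNilpotent_jacobson_bot (R := R)
      rw [IsLocalRing.jacobson_eq_maximalIdeal ⊥ bot_ne_top, ← hmdef] at hn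
      have hex : ∃ j, m ^ j ≠ ⊥ ∧ m ^ (j + 1) = ⊥ := by
        by_contra h
        push_neg at h
        have hall : ∀ j, m ^ j ≠ ⊥ := by
          intro j
          induction j with
          | zero =>
            intro h0
            rw [pow_zero, Ideal.one_eq_top] at h0
            have h1 : (1 : R) ∈ (⊥ : Ideal R) := h0 ▸ Submodule.mem_top
            rw [Ideal.mem_bot] at h1
            exact one_ne_zero h1
          | succ j ih => exact h j ih
        exact hall n hn
      obtain ⟨j, hj1, hj2⟩ := hex
      have hjpos : j ≠ 0 := by
        rintro rfl
        rw [zero_add, pow_one] at hj2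
        exact hmne hj2
      obtain ⟨t₀, ht₀mem, ht₀ne⟩ := Submodule.exists_mem_ne_zero_of_ne_bot hj1
      refine ⟨t₀, Ideal.pow_le_self hjpos ht₀mem, ht₀ne, fun x hx => ?_⟩
      have : t₀ * x ∈ m ^ (j + 1) := by
        rw [pow_succ]
        exact Ideal.mul_mem_mul ht₀mem hx
      rw [hj2] at this
      simpa using this
    have hpm : (p : R) ∈ m := by
      have : IsLocalRing.residue R (p : R) = 0 := by
        rw [map_natCast]
        exact CharP.cast_eq_zero _ p
      exact (IsLocalRing.residue_eq_zero_iff _).mp this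
    -- negation closure of the p-th power set
    have hSneg : ∀ x : R, (∃ u : Rˣ, x = (u : R) ^ p) → ∃ u : Rˣ, -x = (u : R) ^ p := by
      rintro x ⟨u, rfl⟩
      exact ⟨w * u, by rw [Units.val_mul, mul_pow, hw]; ring⟩
    -- key: for every unit v there is t ∈ m with v + t not a p-th power of a unit
    have key : ∀ v : Rˣ, ∃ t ∈ m, ∀ u : Rˣ, (v : R) + t ≠ (u : R) ^ p := by
      intro v
      by_contra h
      push_neg at h
      have h' : ∀ t ∈ m, ∃ u : Rˣ, (v : R) + t = (u : R) ^ p := by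
        intro t ht
        obtain ⟨u, hu⟩ := h t ht
        exact ⟨u, hu⟩
      obtain ⟨u₀, hu₀⟩ := h' 0 (zero_mem m)
      rw [add_zero] at hu₀
      -- surjectivity of s ↦ (1+s)^p - 1 on m
      have hFsurj : ∀ t ∈ m, ∃ s ∈ m, (1 + s) ^ p = 1 + t := by
        intro t ht
        obtain ⟨u, hu⟩ := h' ((v : R) * t) (Ideal.mul_mem_left m _ ht)
        set z : Rˣ := u * u₀⁻¹ with hz
        have hcalc : (v : R) * ((z : R) ^ p) = (v : R) * (1 + t) := by
          have h2 : ((u₀⁻¹ : Rˣ) : R) ^ p * (v : R) = 1 := by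
            rw [hu₀, ← mul_pow, Units.inv_mul, one_pow]
          calc (v : R) * ((z : R) ^ p)
              = (u : R) ^ p * (((u₀⁻¹ : Rˣ) : R) ^ p * (v : R)) := by
                rw [hz]; push_cast; ring
            _ = (u : R) ^ p := by rw [h2, mul_one]
            _ = (v : R) * (1 + t) := by rw [← hu]; ring
        have hzp : (z : R) ^ p = 1 + t := (Units.mul_right_inj v).mp hcalc
        have hres : IsLocalRing.residue R (z : R) = 1 := by
          have h3 : (IsLocalRing.residue R (z : R)) ^ p = 1 := by
            rw [← map_pow, hzp, map_add, map_one, (IsLocalRing.residue_eq_zero_iff _).mpr ht,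
              add_zero]
          have h4 : (IsLocalRing.residue R (z : R) - 1) ^ p = 0 := by
            rw [sub_pow_char, h3, one_pow, sub_self]
          have h5 := pow_eq_zero_iff hp.ne_zero |>.mp h4
          exact sub_eq_zero.mp h5
        refine ⟨(z : R) - 1, ?_, by rw [add_sub_cancel, hzp]⟩
        rw [← IsLocalRing.residue_eq_zero_iff, map_sub, map_one, hres, sub_self]
      -- the map F : m → m, s ↦ (1+s)^p - 1
      have hmemF : ∀ s : R, s ∈ m → (1 + s) ^ p - 1 ∈ m := by
        intro s hs
        rw [← IsLocalRing.residue_eq_zero_iff, map_sub, map_one, map_pow, map_add, map_one,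
          (IsLocalRing.residue_eq_zero_iff _).mpr hs, add_zero, one_pow, sub_self]
      set F : m → m := fun s => ⟨(1 + (s : R)) ^ p - 1, hmemF _ s.2⟩ with hFdef
      have hsurjF : Function.Surjective F := by
        rintro ⟨t, ht⟩
        obtain ⟨s, hs, hseq⟩ := hFsurj t ht
        exact ⟨⟨s, hs⟩, Subtype.ext (by simp [hFdef, hseq])⟩
      have hinjF : Function.Injective F := Finite.injective_iff_surjective.mpr hsurjF
      have heq : F ⟨t₀, ht₀m⟩ = F ⟨0, zero_mem m⟩ := by
        apply Subtype.ext
        simp only [hFdef]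
        rw [one_add_sq_zero_pow (ht₀ann t₀ ht₀m) p]
        rw [mul_comm, ht₀ann _ hpm]
        simp
      exact ht₀ne (by simpa using congrArg Subtype.val (hinjF heq))
    -- edges within a coset of m
    have hsame : ∀ a b : R, a ≠ b → a - b ∈ m → Gᶜ.Adj a b := by
      intro a b hne hmem
      rw [hadj]
      refine ⟨hne, ?_, ?_⟩
      · rintro ⟨u, hu⟩
        exact (IsLocalRing.notMem_maximalIdeal.mpr (hu ▸ u.isUnit.pow p)) hmem
      · rintro ⟨u, hu⟩
        have : b - a ∈ m := by
          have := neg_mem hmem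
          simpa using this
        exact (IsLocalRing.notMem_maximalIdeal.mpr (hu ▸ u.isUnit.pow p)) this
    -- now prove the complement is connected
    refine ⟨fun a b => ?_⟩
    by_cases hab : a = b
    · exact hab ▸ SimpleGraph.Reachable.refl a
    by_cases hmem : a - b ∈ m
    · exact (hsame a b hab hmem).reachable
    · have hvu : IsUnit (a - b) := IsLocalRing.notMem_maximalIdeal.mp hmem
      obtain ⟨t, htm, hts⟩ := key hvu.unit
      rw [hvu.unit_spec] at hts
      set c := b - t with hc
      have hact : a - c = (a - b) + t := by rw [hc]; ring
      have hunit2 : IsUnit (a - c) := by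
        by_contra hnu
        have : a - c ∈ m := IsLocalRing.mem_maximalIdeal _ |>.mpr hnu
        rw [hact] at this
        have : a - b ∈ m := by
          have := sub_mem this htm
          simpa using this
        exact hmem this
      have hadj1 : Gᶜ.Adj a c := by
        rw [hadj]
        refine ⟨?_, ?_, ?_⟩
        · intro h
          exact hunit2.ne_zero (by rw [h, sub_self])
        · rintro ⟨u, hu⟩
          rw [hact] at hu
          exact hts u hu
        · rintro ⟨u, hu⟩
          have : -(c - a) = -((u : R) ^ p) := by rw [hu]
          obtain ⟨u', hu'⟩ := hSneg (c - a) ⟨u, hu⟩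
          have h6 : a - c = (u' : R) ^ p := by rw [← hu']; ring
          rw [hact] at h6
          exact hts u' h6
      by_cases htz : t = 0
      · have : c = b := by rw [hc, htz, sub_zero]
        exact (this ▸ hadj1).reachable
      · have hadj2 : Gᶜ.Adj c b := by
          apply hsame
          · intro h
            rw [hc] at h
            exact htz (sub_eq_self.mp h)
          · rw [hc]
            have : b - t - b = -t := by ring
            rw [this]
            exact neg_mem htm
        exact hadj1.reachable.trans hadj2.reachable
end

section
/- Let p be a prime and let R be a finite commutative local ring with maximal ideal M whose residue field has characteristic p. If a ∈ M but a ∉ M^2, then (a + (R^×)^p) ∩ (R^×)^p = ∅; that is, for all units x, y ∈ R^× one has a + x^p ≠ y^p. -/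
/-!
Write `a = y^p - x^p = (y - x) · ∑ yⁱ x^(p-1-i)`. Modulo the maximal ideal `M`, Frobenius is
injective on the residue field, so `a ∈ M` forces `y ≡ x`; then the geometric sum is congruent
to `p · x^(p-1) ≡ 0`, and both factors lie in `M`, giving `a ∈ M²`.
-/

open Finset

namespace IsLocalRing

variable {R : Type*} [CommRing R] [IsLocalRing R] {p : ℕ}

theorem sub_mem_maximalIdeal_of_pow_sub_pow_mem [Fact p.Prime] [CharP (ResidueField R) p]
    {x y : R} (h : y ^ p - x ^ p ∈ maximalIdeal R) : y - x ∈ maximalIdeal R := by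
  rw [← residue_eq_zero_iff] at h ⊢
  have hpow : residue R (y - x) ^ p = 0 := by
    rwa [map_sub, sub_pow_char, ← map_pow, ← map_pow, ← map_sub]
  exact pow_eq_zero_iff (Fact.out : p.Prime).ne_zero |>.mp hpow

theorem geom_sum₂_mem_maximalIdeal [CharP (ResidueField R) p] {x y : R}
    (h : y - x ∈ maximalIdeal R) :
    ∑ i ∈ range p, y ^ i * x ^ (p - 1 - i) ∈ maximalIdeal R := by
  have hxy : residue R y = residue R x := sub_eq_zero.mp (by rwa [← map_sub, residue_eq_zero_iff])
  rw [← residue_eq_zero_iff, RingHom.map_geom_sum₂, hxy, geom_sum₂_self, CharP.cast_eq_zero,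
    zero_mul]

theorem pow_sub_pow_mem_maximalIdeal_sq_of_mem [Fact p.Prime] [CharP (ResidueField R) p]
    {x y : R} (h : y ^ p - x ^ p ∈ maximalIdeal R) : y ^ p - x ^ p ∈ maximalIdeal R ^ 2 := by
  have hyx := sub_mem_maximalIdeal_of_pow_sub_pow_mem h
  rw [← geom_sum₂_mul, sq]
  exact Ideal.mul_mem_mul (geom_sum₂_mem_maximalIdeal hyx) hyx

end IsLocalRing

theorem stmt_13_general (p : ℕ) (hp : p.Prime) (R : Type*) [CommRing R] [IsLocalRing R]
    (hchar : CharP (IsLocalRing.ResidueField R) p)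
    (a : R) (ha : a ∈ IsLocalRing.maximalIdeal R)
    (ha2 : a ∉ (IsLocalRing.maximalIdeal R) ^ 2) :
    ∀ x y : Rˣ, a + (x : R) ^ p ≠ (y : R) ^ p := by
  have : Fact p.Prime := ⟨hp⟩
  intro x y h
  rw [eq_sub_of_add_eq h] at ha ha2
  exact ha2 (IsLocalRing.pow_sub_pow_mem_maximalIdeal_sq_of_mem ha)

theorem stmt_13 (p : ℕ) (hp : p.Prime) (R : Type*) [CommRing R] [IsLocalRing R] [Fintype R]
    (hchar : CharP (IsLocalRing.ResidueField R) p)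
    (a : R) (ha : a ∈ IsLocalRing.maximalIdeal R)
    (ha2 : a ∉ (IsLocalRing.maximalIdeal R) ^ 2) :
    ∀ x y : Rˣ, a + (x : R) ^ p ≠ (y : R) ^ p :=
  stmt_13_general p hp R hchar a ha ha2
end

section
/- Let p be a prime and let R be a finite commutative local ring whose residue field has characteristic p and whose maximal ideal equals pR (equivalently, G_R(p) is connected). If I is a proper ideal of R satisfying I + (R^×)^p ⊆ (R^×)^p (i.e. I is a homogeneous set in G_R(p)), then I ⊆ p^2·R. In other words, p^2R is the largest ideal of R that is a homogeneous set in G_R(p). -/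
open IsLocalRing

lemma aux_one_add_pow {R : Type*} [CommRing R] (t : R) (ht : t * t = 0) :
    ∀ n : ℕ, (1 + t) ^ n = 1 + (n : R) * t := by
  intro n
  induction n with
  | zero => simp
  | succ n ih =>
    have : (1 + t) ^ (n + 1) = 1 + ((n : R) + 1) * t + (n : R) * (t * t) := by
      rw [pow_succ, ih]; ring
    rw [this, ht]
    push_cast
    ring

theorem stmt_14 (p : ℕ) (hp : p.Prime) (R : Type*) [CommRing R] [IsLocalRing R] [Fintype R]
    (hchar : CharP (IsLocalRing.ResidueField R) p)
    (hM : IsLocalRing.maximalIdeal R = Ideal.span {(p : R)})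
    (I : Ideal R) (hI : I ≠ ⊤)
    (hhom : ∀ a ∈ I, ∀ x : Rˣ, ∃ y : Rˣ, a + (x : R) ^ p = (y : R) ^ p) :
    I ≤ Ideal.span {(p : R) ^ 2} := by
  classical
  haveI := Fact.mk hp
  haveI := hchar
  haveI : ExpChar (ResidueField R) p := ExpChar.prime hp
  haveI : Finite (ResidueField R) :=
    Finite.of_surjective _ (Ideal.Quotient.mk_surjective (I := maximalIdeal R))
  intro a ha
  by_contra hnot
  have ha0 : a ≠ 0 := fun h => hnot (h ▸ Ideal.zero_mem _)
  have hIm : I ≤ maximalIdeal R := IsLocalRing.le_maximalIdeal hI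
  have ham : a ∈ Ideal.span {(p : R)} := hM ▸ hIm ha
  obtain ⟨b, hb⟩ := Ideal.mem_span_singleton.mp ham
  -- b is a unit, else a ∈ (p^2)
  have hbu : IsUnit b := by
    by_contra hbu
    apply hnot
    have hbm : b ∈ Ideal.span {(p : R)} := hM ▸ (mem_maximalIdeal b).mpr hbu
    obtain ⟨c, hc⟩ := Ideal.mem_span_singleton.mp hbm
    exact Ideal.mem_span_singleton.mpr ⟨c, by rw [hb, hc]; ring⟩
  obtain ⟨u, hu⟩ := hbu
  -- p ∈ I, hence maximalIdeal ≤ I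
  have hpI : (p : R) ∈ I := by
    have h1 : a * ↑u⁻¹ ∈ I := I.mul_mem_right _ ha
    have heq : a * ↑u⁻¹ = (p : R) := by
      rw [hb, ← hu, mul_assoc, Units.mul_inv, mul_one]
    rwa [heq] at h1
  have hmI : maximalIdeal R ≤ I := by
    rw [hM, Ideal.span_le]
    simpa using hpI
  -- every unit is a p-th power
  have hsurj : Function.Surjective (fun y : Rˣ => y ^ p) := by
    intro w
    have hk : Function.Surjective (frobenius (ResidueField R) p) :=
      Finite.injective_iff_surjective.mp (frobenius_inj _ p)
    obtain ⟨s, hs⟩ := hk (residue R ↑w)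
    obtain ⟨v, hv⟩ := Ideal.Quotient.mk_surjective (I := maximalIdeal R) s
    have hv' : residue R v = s := hv
    have hvu : IsUnit v := by
      by_contra hvu
      have h0 : residue R v = 0 :=
        Ideal.Quotient.eq_zero_iff_mem.mpr ((mem_maximalIdeal v).mpr hvu)
      have : residue R ↑w = 0 := by
        rw [← hs, frobenius_def, ← hv', h0, zero_pow hp.ne_zero]
      have hw0 : (w : R) ∈ maximalIdeal R := Ideal.Quotient.eq_zero_iff_mem.mp this
      exact (mem_maximalIdeal _).mp hw0 w.isUnit
    have hmem : (↑w : R) - v ^ p ∈ maximalIdeal R := by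
      have : residue R ((↑w : R) - v ^ p) = 0 := by
        rw [map_sub, map_pow, hv', ← frobenius_def, hs, sub_self]
      exact Ideal.Quotient.eq_zero_iff_mem.mp this
    obtain ⟨y, hy⟩ := hhom _ (hmI hmem) hvu.unit
    refine ⟨y, Units.ext ?_⟩
    have hvv : (↑hvu.unit : R) = v := hvu.unit_spec
    push_cast
    rw [← hy, hvv]
    ring
  have hinj : Function.Injective (fun y : Rˣ => y ^ p) :=
    Finite.injective_iff_surjective.mpr hsurj
  -- find t ≠ 0 with p*t = 0 and t*t = 0
  have hart : IsNilpotent (maximalIdeal R) := by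
    have h := IsArtinianRing.isNilpotent_jacobson_bot (R := R)
    rwa [IsLocalRing.jacobson_eq_maximalIdeal ⊥ bot_ne_top] at h
  obtain ⟨N, hN⟩ := hart
  have hpN : (p : R) ^ N = 0 := by
    have : (p : R) ^ N ∈ maximalIdeal R ^ N :=
      Ideal.pow_mem_pow (hM ▸ Ideal.mem_span_singleton_self _) N
    rw [hN] at this
    simpa using this
  have hex : ∃ j, a * (p : R) ^ j = 0 := ⟨N, by rw [hpN, mul_zero]⟩
  set j := Nat.find hex with hjdef
  have hj : a * (p : R) ^ j = 0 := Nat.find_spec hex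
  have hj1 : 1 ≤ j := by
    rcases Nat.eq_zero_or_pos j with h0 | h1
    · exfalso; apply ha0; rw [h0, pow_zero, mul_one] at hj; exact hj
    · exact h1
  obtain ⟨k, hk⟩ : ∃ k, j = k + 1 := ⟨j - 1, (Nat.succ_pred_eq_of_pos hj1).symm⟩
  have ht0 : a * (p : R) ^ k ≠ 0 := Nat.find_min hex (by omega)
  set t := a * (p : R) ^ k with htdef
  have hpt : (p : R) * t = 0 := by
    have h2 : (p : R) * t = a * (p : R) ^ j := by rw [htdef, hk]; ring
    rw [h2, hj]
  have htt : t * t = 0 := by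
    have h2 : t * t = (a * (p : R) ^ j) * (b * (p : R) ^ k) := by
      rw [htdef, hb, hk]; ring
    rw [h2, hj, zero_mul]
  have hz : IsUnit (1 + t) := IsNilpotent.isUnit_one_add ⟨2, by rw [pow_two]; exact htt⟩
  have hzp : (1 + t) ^ p = 1 := by
    rw [aux_one_add_pow t htt p, hpt, add_zero]
  have hz1 : hz.unit = 1 := by
    apply hinj
    apply Units.ext
    show ((hz.unit ^ p : Rˣ) : R) = ((1 ^ p : Rˣ) : R)
    rw [Units.val_pow_eq_pow_val, hz.unit_spec, hzp, one_pow, Units.val_one]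
  have h1t : (1 : R) + t = 1 := by
    have h3 := congrArg (Units.val) hz1
    rwa [hz.unit_spec] at h3
  exact ht0 (by rwa [add_eq_left] at h1t)
end

section
/- Let p be a prime with p ≡ 1 (mod 3) and let R be a finite commutative local ring whose residue field has characteristic p (note -1 ∈ (R^×)^p automatically since p is odd). Then K_3 is an induced subgraph of the p-unitary Cayley graph G_R(p); that is, there exist three elements of R whose pairwise differences all lie in (R^×)^p. -/
theorem stmt_17 (p : ℕ) (hp : p.Prime) (hmod : p % 3 = 1)
    (R : Type*) [CommRing R] [IsLocalRing R] [Fintype R]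
    (hchar : CharP (IsLocalRing.ResidueField R) p) :
    ∃ a b c : R, (∃ u : Rˣ, (u : R) ^ p = a - b) ∧ (∃ u : Rˣ, (u : R) ^ p = b - c) ∧
      (∃ u : Rˣ, (u : R) ^ p = a - c) := by
  classical
  haveI : Fact p.Prime := ⟨hp⟩
  haveI : Fact (Nat.Prime 3) := ⟨by norm_num⟩
  set k := IsLocalRing.ResidueField R with hk
  haveI : Finite k := Quotient.finite _
  haveI : Fintype k := Fintype.ofFinite k
  have hp3 : p ≠ 3 := by omega
  obtain ⟨n, -, hcard⟩ := FiniteField.card k p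
  -- 3 divides card of kˣ
  have h3k : 3 ∣ Fintype.card kˣ := by
    rw [Fintype.card_units, hcard]
    have hmod' : p ^ (n : ℕ) % 3 = 1 := by
      rw [Nat.pow_mod, hmod, Nat.one_pow]
    have hpos : 1 ≤ p ^ (n : ℕ) := Nat.one_le_pow _ _ hp.pos
    omega
  -- the residue map on units is surjective
  have hsurj : Function.Surjective
      (Units.map (IsLocalRing.residue R : R →* k)) := by
    intro v
    obtain ⟨x, hx⟩ := Ideal.Quotient.mk_surjective (v : k)
    have hxr : IsLocalRing.residue R x = (v : k) := hx
    have hxu : IsUnit x := (IsLocalRing.residue_ne_zero_iff_isUnit x).mp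
      (by rw [hxr]; exact v.ne_zero)
    obtain ⟨w, hw⟩ := hxu
    refine ⟨w, Units.ext ?_⟩
    simp [Units.coe_map, hw, hxr]
  have h3R : 3 ∣ Fintype.card Rˣ := by
    refine h3k.trans ?_
    have := Subgroup.card_dvd_of_surjective _ hsurj
    simpa [Nat.card_eq_fintype_card] using this
  -- Cauchy: an element of order 3
  obtain ⟨u, hu⟩ := exists_prime_orderOf_dvd_card 3 h3R
  have hu1 : u ≠ 1 := by
    intro h; rw [h, orderOf_one] at hu; omega
  have hu3 : u ^ 3 = 1 := by rw [← hu]; exact pow_orderOf_eq_one u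
  set ω : R := (u : R) with hω
  have hω3 : ω ^ 3 = 1 := by
    have := congrArg (Units.val) hu3
    simpa using this
  -- 3 is a unit in R
  have h3u : IsUnit (3 : R) := by
    apply (IsLocalRing.residue_ne_zero_iff_isUnit _).mp
    have : (IsLocalRing.residue R) (3 : R) = ((3 : ℕ) : k) := by
      simp only [show (3 : R) = ((3 : ℕ) : R) by norm_num, map_natCast]
    rw [this]
    intro h
    have := (CharP.cast_eq_zero_iff k p 3).mp h
    have := (Nat.prime_dvd_prime_iff_eq hp (by norm_num)).mp this
    exact hp3 this
  -- ω - 1 is a unit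
  have key : (ω - 1) * ((ω - 1) ^ 2 + 3 * (ω - 1) + 3) = 0 := by
    linear_combination hω3
  have hnu : IsUnit (ω - 1) := by
    by_contra h
    have hm : IsLocalRing.residue R (ω - 1) = 0 :=
      Ideal.Quotient.eq_zero_iff_mem.mpr ((IsLocalRing.mem_maximalIdeal _).mpr h)
    have hvu : IsUnit ((ω - 1) ^ 2 + 3 * (ω - 1) + 3) := by
      apply (IsLocalRing.residue_ne_zero_iff_isUnit _).mp
      have : (IsLocalRing.residue R) ((ω - 1) ^ 2 + 3 * (ω - 1) + 3)
          = (IsLocalRing.residue R) (3 : R) := by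
        simp [map_add, map_mul, map_pow, hm]
      rw [this]
      exact (IsLocalRing.residue_ne_zero_iff_isUnit _).mpr h3u
    have hzero : ω - 1 = 0 := (IsUnit.mul_left_eq_zero hvu).mp key
    exact hu1 (Units.val_eq_one.mp (sub_eq_zero.mp hzero))
  have hsum : ω ^ 2 + ω + 1 = 0 := by
    have h2 : (ω - 1) * (ω ^ 2 + ω + 1) = 0 := by linear_combination hω3
    exact (IsUnit.mul_right_eq_zero hnu).mp h2
  -- p = 3 t + 1, p odd
  obtain ⟨t, hpt⟩ : ∃ t, p = 3 * t + 1 := ⟨p / 3, by omega⟩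
  have hpodd : Odd p := hp.odd_of_ne_two (by omega)
  have hωp : ω ^ p = ω := by
    rw [hpt, pow_succ, pow_mul, hω3, one_pow, one_mul]
  refine ⟨1 + ω, ω, 0, ⟨1, by simp⟩, ⟨u, by simpa using hωp⟩, ⟨-u ^ 2, ?_⟩⟩
  have hval : ((-u ^ 2 : Rˣ) : R) = -(ω ^ 2) := by simp [hω]
  rw [hval, hpodd.neg_pow, ← pow_mul]
  have h2p : ω ^ (2 * p) = ω ^ 2 := by
    have : 2 * p = 3 * (2 * t) + 2 := by omega
    rw [this, pow_add, pow_mul, hω3, one_pow, one_mul]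
  rw [h2p]
  linear_combination -hsum
end

section
/- Let G₁ and G₂ be simple graphs on nonempty vertex sets V₁ and V₂. Then the complement of the tensor product G₁ × G₂ is connected, where G₁ × G₂ is the simple graph on V₁ × V₂ in which (a,b) and (c,d) are adjacent if and only if a is adjacent to c in G₁ and b is adjacent to d in G₂. -/
/-
Any two vertices of the complement that share a coordinate are equal or adjacent, since a loop
in either factor is impossible. Hence `(a, b)` reaches `(c, d)` through `(a, d)`.
-/

/-- The tensor (direct) product of two simple graphs: `(a, b)` and `(c, d)` are adjacent
iff `a ~ c` in `G₁` and `b ~ d` in `G₂`. -/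
def SimpleGraph.tensorProd {V₁ V₂ : Type*} (G₁ : SimpleGraph V₁) (G₂ : SimpleGraph V₂) :
    SimpleGraph (V₁ × V₂) where
  Adj a b := G₁.Adj a.1 b.1 ∧ G₂.Adj a.2 b.2
  symm := ⟨fun a b ⟨h₁, h₂⟩ => ⟨h₁.symm, h₂.symm⟩⟩
  loopless := ⟨fun a ⟨h₁, _⟩ => G₁.irrefl h₁⟩

namespace SimpleGraph

variable {V₁ V₂ : Type*} {G₁ : SimpleGraph V₁} {G₂ : SimpleGraph V₂}

theorem tensorProd_compl_reachable_of_fst_eq {p q : V₁ × V₂} (h : p.1 = q.1) :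
    (G₁.tensorProd G₂)ᶜ.Reachable p q := by
  by_cases hpq : p = q
  · exact hpq ▸ Reachable.refl p
  · exact Adj.reachable ⟨hpq, fun hadj => G₁.irrefl (h ▸ hadj.1)⟩

theorem tensorProd_compl_reachable_of_snd_eq {p q : V₁ × V₂} (h : p.2 = q.2) :
    (G₁.tensorProd G₂)ᶜ.Reachable p q := by
  by_cases hpq : p = q
  · exact hpq ▸ Reachable.refl p
  · exact Adj.reachable ⟨hpq, fun hadj => G₂.irrefl (h ▸ hadj.2)⟩

end SimpleGraph

open SimpleGraph in
theorem stmt_18 {V₁ V₂ : Type*} [Nonempty V₁] [Nonempty V₂]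
    (G₁ : SimpleGraph V₁) (G₂ : SimpleGraph V₂) :
    (G₁.tensorProd G₂)ᶜ.Connected := by
  refine (connected_iff _).2 ⟨fun ⟨a, b⟩ ⟨c, d⟩ => ?_, inferInstance⟩
  exact (tensorProd_compl_reachable_of_fst_eq (p := (a, b)) (q := (a, d)) rfl).trans
    (tensorProd_compl_reachable_of_snd_eq rfl)
end

section
/- Let p be a prime, let ι be a finite index set with |ι| ≥ 2, and for each i ∈ ι let R_i be a finite commutative local ring with maximal ideal M_i; set R = ∏_{i∈ι} R_i and assume -1 ∈ (R^×)^p. Then the p-unitary Cayley graph G_R(p) is prime if and only if all of the following hold: (1) for each i, the graph G_{R_i}(p) is connected; (2) G_R(p) is connected; (3) for each i such that p is invertible in R_i, the ring R_i is a field; (4) for each i such that p is not invertible in R_i, one has M_i = pR_i and p^2·R_i = 0. -/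
def SimpleGraph.IsHomogeneousSet {V : Type*} (G : SimpleGraph V) (X : Set V) : Prop :=
  ∀ v ∉ X, (∀ x ∈ X, G.Adj v x) ∨ (∀ x ∈ X, ¬ G.Adj v x)
def SimpleGraph.IsPrimeGraph {V : Type*} [Fintype V] (G : SimpleGraph V) : Prop :=
  ∀ X : Set V, G.IsHomogeneousSet X → ¬(2 ≤ X.ncard ∧ X.ncard < Fintype.card V)

/-!
Write `S = (Rˣ)^p` and, for a finite ring `B`, let `T(B)` be the group of translations `c` with
`S + c = S`. In the Cayley graph, an additive subgroup containing `S` is homogeneous (no edge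
leaves it), and so is a subgroup of `T` (all its elements have the same neighbours). Hence if
`G_R(p)` is prime, `S` generates `R` and each `R_i` additively (i.e. the graphs are connected),
and `T(R_i) = 0`, since `T(R_i)` placed in coordinate `i` lies in `T(R)` and is proper as
`|ι| ≥ 2`. Conversely, under these conditions a homogeneous set containing `0` and some `d ≠ 0`
is closed under adding elements of `S`, hence is everything.

For a finite local ring with maximal ideal `M`, connectivity makes `T` an ideal, proper as
`-1 ∈ S`, so `T ⊆ M`. If `p` is a unit, `x ↦ x^p` is injective on the finite set `1 + M`, so
`1 + M ⊆ S` and `T = M`. If not, every element is a `p`-th power modulo `p`, so `M = (p) + M²`,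
and `M = (p)` by Nakayama; then `T = 0` iff `p² = 0`: for odd `p`, `e ≥ 2` and `p^(e+1) = 0`,
`1 + p^e r = (1 + p^(e-1) r)^p` puts `p^e` in `T`, while for `p = 2` already `2 = 0`.
-/

open IsLocalRing

theorem SimpleGraph.IsHomogeneousSet.preimage {V W : Type*} {G : SimpleGraph V}
    {G' : SimpleGraph W} {X : Set W} (hX : G'.IsHomogeneousSet X) (f : G ↪g G') :
    G.IsHomogeneousSet (f ⁻¹' X) := fun v hv =>
  (hX (f v) hv).imp (fun h _ hx => f.map_adj_iff.1 (h _ hx))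
    (fun h _ hx hadj => h _ hx (f.map_adj_iff.2 hadj))

theorem SimpleGraph.IsPrimeGraph.eq_bot_or_eq_top {V : Type*} [AddGroup V] [Fintype V]
    {G : SimpleGraph V} (hG : G.IsPrimeGraph) {H : AddSubgroup V}
    (hH : G.IsHomogeneousSet H) : H = ⊥ ∨ H = ⊤ := by
  by_contra! h
  obtain ⟨⟨x, hx⟩, hx0⟩ := AddSubgroup.ne_bot_iff_exists_ne_zero.1 h.1
  refine hG _ hH ⟨(Set.one_lt_ncard_iff (Set.toFinite _)).2 ⟨0, x, H.zero_mem, hx, ?_⟩, ?_⟩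
  · exact fun h0 => hx0 (Subtype.ext h0.symm)
  · rw [← Nat.card_eq_fintype_card]
    exact Set.ncard_lt_card (mt AddSubgroup.coe_eq_univ.1 h.2)

namespace PUnitaryCayley

def unitPowers (B : Type*) [CommRing B] (p : ℕ) : Submonoid B where
  carrier := {x | ∃ u : Bˣ, (u : B) ^ p = x}
  one_mem' := ⟨1, by simp⟩
  mul_mem' := by
    rintro _ _ ⟨u, rfl⟩ ⟨v, rfl⟩
    exact ⟨u * v, by simp [mul_pow]⟩

section Ring

variable {B : Type*} [CommRing B] {p : ℕ}

theorem exists_mul_eq_one_of_mem_unitPowers {x : B} (hx : x ∈ unitPowers B p) :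
    ∃ y ∈ unitPowers B p, y * x = 1 := by
  obtain ⟨u, rfl⟩ := hx
  refine ⟨_, ⟨u⁻¹, rfl⟩, ?_⟩
  rw [← mul_pow, ← Units.val_mul, inv_mul_cancel, Units.val_one, one_pow]

theorem zero_notMem_unitPowers [Nontrivial B] : (0 : B) ∉ unitPowers B p := by
  rintro ⟨u, hu⟩
  exact (u ^ p).ne_zero (by simpa using hu)

theorem neg_mem_unitPowers (hneg : (-1 : B) ∈ unitPowers B p) {x : B}
    (hx : x ∈ unitPowers B p) : -x ∈ unitPowers B p := by
  simpa using mul_mem hneg hx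

theorem adj_iff [Nontrivial B] (hneg : (-1 : B) ∈ unitPowers B p) {a b : B} :
    (pUnitaryCayley B p).Adj a b ↔ a - b ∈ unitPowers B p := by
  have hmem : ∀ x : B, (∃ u : Bˣ, x = (u : B) ^ p) ↔ x ∈ unitPowers B p :=
    fun x => exists_congr fun _ => eq_comm
  rw [pUnitaryCayley, SimpleGraph.fromRel_adj, hmem, hmem, ← neg_sub a b]
  refine ⟨fun ⟨_, h⟩ => h.elim id fun h => by simpa using neg_mem_unitPowers hneg h,
    fun h => ⟨fun hab => zero_notMem_unitPowers (by rwa [hab, sub_self] at h), Or.inl h⟩⟩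

variable (p) in
def addRightIso (c : B) : pUnitaryCayley B p ≃g pUnitaryCayley B p where
  toEquiv := Equiv.addRight c
  map_rel_iff' := by simp [pUnitaryCayley]

theorem eq_univ_of_add_mem (hneg : (-1 : B) ∈ unitPowers B p)
    (hcl : AddSubgroup.closure (unitPowers B p : Set B) = ⊤) {A : Set B} (h0 : 0 ∈ A)
    (hA : ∀ a ∈ A, ∀ s ∈ unitPowers B p, a + s ∈ A) : A = Set.univ := by
  have key : ∀ x ∈ AddSubgroup.closure (unitPowers B p : Set B), ∀ a ∈ A, a + x ∈ A := by
    intro x hx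
    induction hx using AddSubgroup.closure_induction'' with
    | mem s hs => exact fun a ha => hA a ha s hs
    | neg_mem s hs => exact fun a ha => hA a ha (-s) (neg_mem_unitPowers hneg hs)
    | zero => simp
    | add x y _ _ hx hy => exact fun a ha => add_assoc a x y ▸ hy _ (hx a ha)
  exact Set.eq_univ_of_forall fun x => by simpa using key x (hcl ▸ AddSubgroup.mem_top x) 0 h0

theorem connected_iff_closure_eq_top [Nontrivial B] (hneg : (-1 : B) ∈ unitPowers B p) :
    (pUnitaryCayley B p).Connected ↔
      AddSubgroup.closure (unitPowers B p : Set B) = ⊤ := by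
  constructor
  · intro h
    have sub_mem_of_walk : ∀ {a b : B} (_ : (pUnitaryCayley B p).Walk a b),
        a - b ∈ AddSubgroup.closure (unitPowers B p : Set B) := by
      intro a b w
      induction w with
      | nil => simp
      | @cons a c b hadj _ ih =>
        rw [← sub_add_sub_cancel a c b]
        exact add_mem (AddSubgroup.subset_closure ((adj_iff hneg).1 hadj)) ih
    exact eq_top_iff.2 fun x _ => by simpa using sub_mem_of_walk (h.preconnected x 0).some
  · intro hcl
    have hreach := Set.eq_univ_iff_forall.1 <|
      eq_univ_of_add_mem (A := {x | (pUnitaryCayley B p).Reachable 0 x}) hneg hcl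
        (SimpleGraph.Reachable.refl 0) fun a ha s hs =>
          ha.trans ((adj_iff hneg).2 (by simpa using hs)).reachable.symm
    exact (SimpleGraph.connected_iff _).2 ⟨fun x y => (hreach x).symm.trans (hreach y), ⟨0⟩⟩

theorem isHomogeneousSet_of_unitPowers_subset [Nontrivial B]
    (hneg : (-1 : B) ∈ unitPowers B p) {H : AddSubgroup B}
    (hH : (unitPowers B p : Set B) ⊆ H) : (pUnitaryCayley B p).IsHomogeneousSet H :=
  fun v hv => Or.inr fun x hx hadj =>
    hv (by simpa using H.add_mem (hH ((adj_iff hneg).1 hadj)) hx)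

theorem eq_top_of_isPrimeGraph [Fintype B] [Nontrivial B] (hneg : (-1 : B) ∈ unitPowers B p)
    (hG : (pUnitaryCayley B p).IsPrimeGraph) {H : AddSubgroup B}
    (hH : (unitPowers B p : Set B) ⊆ H) : H = ⊤ :=
  (SimpleGraph.IsPrimeGraph.eq_bot_or_eq_top hG
    (isHomogeneousSet_of_unitPowers_subset hneg hH)).resolve_left
    fun h => one_ne_zero (α := B) (by simpa [h] using hH (one_mem (unitPowers B p)))

theorem isPrimeGraph_of_eq_univ [Fintype B]
    (h : ∀ X : Set B, (pUnitaryCayley B p).IsHomogeneousSet X →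
      0 ∈ X → ∀ d ∈ X, d ≠ 0 → X = Set.univ) :
    (pUnitaryCayley B p).IsPrimeGraph := by
  rintro X hX ⟨hX2, hXcard⟩
  obtain ⟨a, b, ha, hb, hab⟩ := (Set.one_lt_ncard_iff (Set.toFinite X)).1 hX2
  have hX' : (· + b) ⁻¹' X = Set.univ :=
    h _ (SimpleGraph.IsHomogeneousSet.preimage hX (addRightIso p b).toEmbedding)
      (by simpa using hb) (a - b) (by simpa using ha) (sub_ne_zero.2 hab)
  have : X = Set.univ := Set.eq_univ_of_forall fun y => by
    simpa using Set.eq_univ_iff_forall.1 hX' (y - b)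
  simp [this] at hXcard

theorem one_add_pow_of_pow_three_eq_zero {x : B} (hx : x ^ 3 = 0) (n : ℕ) :
    (1 + x) ^ n = 1 + n * x + n.choose 2 * x ^ 2 := by
  induction n with
  | zero => simp
  | succ n ih =>
    rw [pow_succ, ih, Nat.choose_succ_succ', Nat.choose_one_right]
    push_cast
    linear_combination (n.choose 2 : B) * hx

theorem exists_sub_pow_mem_span [Fact p.Prime] (hpu : ¬IsUnit (p : B))
    (hcl : AddSubgroup.closure (unitPowers B p : Set B) = ⊤) (b : B) :
    ∃ x, b - x ^ p ∈ Ideal.span {(p : B)} := by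
  have := CharP.quotient B p hpu
  let A : Subring B :=
    (frobenius (B ⧸ Ideal.span {(p : B)}) p).range.comap (Ideal.Quotient.mk _)
  have hS : (unitPowers B p : Set B) ⊆ A := by
    rintro _ ⟨u, rfl⟩
    exact ⟨Ideal.Quotient.mk _ u, by simp [frobenius_def]⟩
  obtain ⟨y, hy⟩ : b ∈ A :=
    (AddSubgroup.closure_le A.toAddSubgroup).2 hS (hcl ▸ AddSubgroup.mem_top b)
  obtain ⟨x, rfl⟩ := Ideal.Quotient.mk_surjective y
  exact ⟨x, Ideal.Quotient.eq.1 (by simpa [frobenius_def] using hy.symm)⟩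

variable (B p) in
/-- Finiteness turns `S + c ⊆ S` into `S + c = S`, so these translations form a group. -/
def stabilizer [Finite B] : AddSubgroup B where
  carrier := {c | ∀ s ∈ unitPowers B p, s + c ∈ unitPowers B p}
  zero_mem' := by simp
  add_mem' ha hb s hs := add_assoc s _ _ ▸ hb _ (ha s hs)
  neg_mem' {c} hc s hs := by
    obtain ⟨t, ht, rfl⟩ :=
      (((Set.toFinite _).injOn_iff_bijOn_of_mapsTo fun s hs => hc s hs).1
        (add_left_injective c).injOn).surjOn hs
    simpa using ht

variable [Finite B]

theorem mem_stabilizer_of_one_add_mul_mem {c : B} (h : ∀ r, 1 + c * r ∈ unitPowers B p) :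
    c ∈ stabilizer B p := fun s hs => by
  obtain ⟨t, -, hts⟩ := exists_mul_eq_one_of_mem_unitPowers hs
  have : s + c = s * (1 + c * t) := by linear_combination -c * hts
  exact this ▸ mul_mem hs (h t)

theorem one_notMem_stabilizer [Nontrivial B] (hneg : (-1 : B) ∈ unitPowers B p) :
    (1 : B) ∉ stabilizer B p := fun h =>
  zero_notMem_unitPowers (by simpa using h _ hneg)

theorem mul_mem_stabilizer (hcl : AddSubgroup.closure (unitPowers B p : Set B) = ⊤) {c : B}
    (hc : c ∈ stabilizer B p) (x : B) : x * c ∈ stabilizer B p := by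
  have hS : (unitPowers B p : Set B) ⊆ (stabilizer B p).comap (AddMonoidHom.mulRight c) := by
    intro t ht s hs
    obtain ⟨t', ht', htt'⟩ := exists_mul_eq_one_of_mem_unitPowers ht
    have : s + t * c = t * (t' * s + c) := by linear_combination -s * htt'
    exact this ▸ mul_mem ht (hc _ (mul_mem ht' hs))
  exact (AddSubgroup.closure_le _).2 hS (hcl ▸ AddSubgroup.mem_top x)

theorem stabilizer_subset_maximalIdeal [IsLocalRing B] (hneg : (-1 : B) ∈ unitPowers B p)
    (hcl : AddSubgroup.closure (unitPowers B p : Set B) = ⊤) :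
    (stabilizer B p : Set B) ⊆ maximalIdeal B := fun c hc =>
  (mem_maximalIdeal c).2 fun hunit =>
    one_notMem_stabilizer hneg (by simpa using mul_mem_stabilizer hcl hc ↑hunit.unit⁻¹)

theorem natCast_pow_mem_stabilizer (hp : p.Prime) (hp2 : p ≠ 2) {e : ℕ} (he : 2 ≤ e)
    (hpe : (p : B) ^ (e + 1) = 0) : (p : B) ^ e ∈ stabilizer B p := by
  obtain ⟨f, rfl⟩ := Nat.exists_eq_add_of_le' he
  refine mem_stabilizer_of_one_add_mul_mem fun r => ?_
  set x := (p : B) ^ (f + 1) * r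
  have hx3 : x ^ 3 = 0 := by
    rw [mul_pow, ← pow_mul, pow_eq_zero_of_le (by omega) hpe, zero_mul]
  have hpx2 : (p : B) * x ^ 2 = 0 := by
    rw [mul_pow, ← pow_mul, ← mul_assoc, ← pow_succ', pow_eq_zero_of_le (by omega) hpe,
      zero_mul]
  obtain ⟨k, hk⟩ := hp.dvd_choose_self two_ne_zero (hp.two_le.lt_of_ne' hp2)
  refine ⟨(IsNilpotent.isUnit_one_add ⟨3, hx3⟩).unit, ?_⟩
  rw [IsUnit.unit_spec, one_add_pow_of_pow_three_eq_zero hx3, hk]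
  push_cast
  linear_combination (k : B) * hpx2

theorem isHomogeneousSet_of_le_stabilizer [Nontrivial B] (hneg : (-1 : B) ∈ unitPowers B p)
    {H : AddSubgroup B} (hH : H ≤ stabilizer B p) :
    (pUnitaryCayley B p).IsHomogeneousSet H := by
  intro v _
  by_cases h : ∃ x ∈ H, (pUnitaryCayley B p).Adj v x
  · obtain ⟨x, hx, hadj⟩ := h
    refine Or.inl fun y hy => (adj_iff hneg).2 ?_
    simpa using hH (H.sub_mem hx hy) _ ((adj_iff hneg).1 hadj)
  · exact Or.inr fun x hx hadj => h ⟨x, hx, hadj⟩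

end Ring

section LocalRing

variable {B : Type*} [CommRing B] [IsLocalRing B] {p : ℕ}

theorem eq_of_pow_eq_of_residue_eq (hpu : IsUnit (p : B)) {u v : B} (hu : IsUnit u)
    (huv : residue B u = residue B v) (h : u ^ p = v ^ p) : u = v := by
  have hsum : IsUnit (∑ i ∈ Finset.range p, u ^ i * v ^ (p - 1 - i)) := by
    rw [← residue_ne_zero_iff_isUnit, map_sum]
    simp only [map_mul, map_pow, ← huv]
    rw [geom_sum₂_self]
    exact mul_ne_zero (by simpa using (residue_ne_zero_iff_isUnit _).2 hpu)
      (pow_ne_zero _ ((residue_ne_zero_iff_isUnit u).2 hu))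
  have := geom_sum₂_mul u v p
  rw [h, sub_self] at this
  exact sub_eq_zero.1 (hsum.mul_right_eq_zero.1 this)

theorem one_add_mem_unitPowers [Finite B] (hpu : IsUnit (p : B)) {m : B}
    (hm : m ∈ maximalIdeal B) : 1 + m ∈ unitPowers B p := by
  let U := {x : B | residue B x = 1}
  have hunit : ∀ x ∈ U, IsUnit x := fun x (hx : residue B x = 1) =>
    (residue_ne_zero_iff_isUnit x).1 (by simp [hx])
  have hbij : Set.BijOn (· ^ p) U U :=
    ((Set.toFinite U).injOn_iff_bijOn_of_mapsTo fun x (hx : residue B x = 1) => by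
      simp [U, hx]).1 fun u hu v hv h =>
        eq_of_pow_eq_of_residue_eq hpu (hunit u hu) (hu.trans hv.symm) h
  obtain ⟨x, hx, hxm⟩ := hbij.surjOn
    (show residue B (1 + m) = 1 by simp [(residue_eq_zero_iff m).2 hm])
  exact ⟨(hunit x hx).unit, hxm⟩

theorem stabilizer_eq_bot_iff_isField [Finite B] (hpu : IsUnit (p : B))
    (hneg : (-1 : B) ∈ unitPowers B p)
    (hcl : AddSubgroup.closure (unitPowers B p : Set B) = ⊤) :
    stabilizer B p = ⊥ ↔ IsField B := by
  have hTM : (stabilizer B p : Set B) = maximalIdeal B :=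
    (stabilizer_subset_maximalIdeal hneg hcl).antisymm fun _ hm =>
      mem_stabilizer_of_one_add_mul_mem fun r =>
        one_add_mem_unitPowers hpu (Ideal.mul_mem_right r _ hm)
  rw [isField_iff_maximalIdeal_eq, ← SetLike.coe_set_eq, hTM, AddSubgroup.coe_bot,
    ← Submodule.bot_coe (R := B), SetLike.coe_set_eq]

theorem maximalIdeal_eq_span_of_not_isUnit [Finite B] (hp : p.Prime) (hpu : ¬IsUnit (p : B))
    (hcl : AddSubgroup.closure (unitPowers B p : Set B) = ⊤) :
    maximalIdeal B = Ideal.span {(p : B)} := by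
  have := Fact.mk hp
  have hpM : Ideal.span {(p : B)} ≤ maximalIdeal B :=
    (Ideal.span_singleton_le_iff_mem _).2 ((mem_maximalIdeal _).2 hpu)
  refine le_antisymm (Submodule.le_of_le_smul_of_le_jacobson_bot
    (maximalIdeal B).fg_of_isNoetherianRing (maximalIdeal_le_jacobson ⊥) fun m hm => ?_) hpM
  obtain ⟨x, hx⟩ := exists_sub_pow_mem_span hpu hcl m
  have hxM : x ∈ maximalIdeal B := (maximalIdeal.isMaximal B).isPrime.mem_of_pow_mem p
    (by simpa using sub_mem hm (hpM hx))
  have hxp : x ^ p ∈ maximalIdeal B • maximalIdeal B := by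
    rw [smul_eq_mul, ← sq]
    exact Ideal.pow_le_pow_right hp.two_le (Ideal.pow_mem_pow hxM p)
  simpa using Submodule.add_mem_sup hx hxp

/-- `(u - 1)² = -2u ∈ M` gives `u = 1 + 2r`, and then `0 = u² + 1 = 2 (1 + 2r + 2r²)`. -/
theorem two_eq_zero_of_maximalIdeal_eq_span (hM : maximalIdeal B = Ideal.span {2})
    (hneg : (-1 : B) ∈ unitPowers B 2) : (2 : B) = 0 := by
  obtain ⟨u, hu⟩ := hneg
  have h2M : (2 : B) ∈ maximalIdeal B := hM ▸ Ideal.mem_span_singleton_self 2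
  have hu1 : (u : B) - 1 ∈ maximalIdeal B :=
    (maximalIdeal.isMaximal B).isPrime.mem_of_pow_mem 2 <| by
      have : ((u : B) - 1) ^ 2 = -(2 * u) := by linear_combination hu
      exact this ▸ neg_mem (Ideal.mul_mem_right _ _ h2M)
  obtain ⟨r, hr⟩ := Ideal.mem_span_singleton'.1 (hM ▸ hu1)
  have hunit : IsUnit (1 + 2 * (r + r ^ 2) : B) := (residue_ne_zero_iff_isUnit _).1 (by
    simp [(residue_eq_zero_iff 2).2 h2M])
  exact hunit.mul_right_eq_zero.1 (by linear_combination hu + ((u : B) + 1 + 2 * r) * hr)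

theorem natCast_sq_eq_zero_of_stabilizer_eq_bot [Finite B] (hp : p.Prime) (hpu : ¬IsUnit (p : B))
    (hM : maximalIdeal B = Ideal.span {(p : B)}) (hneg : (-1 : B) ∈ unitPowers B p)
    (hT : stabilizer B p = ⊥) : (p : B) ^ 2 = 0 := by
  rcases eq_or_ne p 2 with rfl | hp2
  · simp [two_eq_zero_of_maximalIdeal_eq_span (by simpa using hM) hneg]
  have descend : ∀ k, (p : B) ^ (k + 2) = 0 → (p : B) ^ 2 = 0 := by
    intro k
    induction k with
    | zero => exact id
    | succ k ih =>
      exact fun h => ih (by simpa [hT] using natCast_pow_mem_stabilizer hp hp2 (by omega) h)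
  obtain ⟨n, hn⟩ :=
    Ring.KrullDimLE.isNilpotent_iff_mem_maximalIdeal.2 ((mem_maximalIdeal _).2 hpu)
  exact descend n (pow_eq_zero_of_le (by omega) hn)

theorem stabilizer_eq_bot_of_sq_eq_zero [Finite B] (hp : p.Prime)
    (hneg : (-1 : B) ∈ unitPowers B p)
    (hcl : AddSubgroup.closure (unitPowers B p : Set B) = ⊤)
    (hM : maximalIdeal B = Ideal.span {(p : B)}) (hp2 : (p : B) ^ 2 = 0) :
    stabilizer B p = ⊥ := by
  have := Fact.mk hp
  have hpM : (p : B) ∈ maximalIdeal B := hM ▸ Ideal.mem_span_singleton_self _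
  have := CharP.quotient B p ((mem_maximalIdeal _).1 hpM)
  refine eq_bot_iff.2 fun c hc => ?_
  obtain ⟨r, rfl⟩ :=
    Ideal.mem_span_singleton'.1 (hM ▸ stabilizer_subset_maximalIdeal hneg hcl hc)
  obtain ⟨u, hu⟩ := hc 1 (one_mem _)
  have hu1 : (u : B) - 1 ∈ maximalIdeal B :=
    (maximalIdeal.isMaximal B).isPrime.mem_of_pow_mem p <| by
      rw [hM, ← Ideal.Quotient.eq_zero_iff_mem, map_pow, map_sub, map_one, sub_pow_char,
        one_pow, ← map_pow, hu, map_add, map_one, add_sub_cancel_left,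
        Ideal.Quotient.eq_zero_iff_mem]
      exact Ideal.mul_mem_left _ _ (Ideal.mem_span_singleton_self _)
  obtain ⟨s, hs⟩ := Ideal.mem_span_singleton'.1 (hM ▸ hu1)
  have hs3 : (s * p : B) ^ 3 = 0 := by linear_combination (s ^ 3 * p) * hp2
  have hup : (u : B) ^ p = 1 := by
    rw [← sub_add_cancel (u : B) 1, ← hs, add_comm, one_add_pow_of_pow_three_eq_zero hs3]
    linear_combination (s + (p.choose 2 : B) * s ^ 2) * hp2
  exact (AddSubgroup.mem_bot).2 (by linear_combination hu.symm.trans hup)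

theorem stabilizer_eq_bot_iff_of_not_isUnit [Finite B] (hp : p.Prime) (hpu : ¬IsUnit (p : B))
    (hneg : (-1 : B) ∈ unitPowers B p)
    (hcl : AddSubgroup.closure (unitPowers B p : Set B) = ⊤) :
    stabilizer B p = ⊥ ↔ maximalIdeal B = Ideal.span {(p : B)} ∧ (p : B) ^ 2 = 0 := by
  have hM := maximalIdeal_eq_span_of_not_isUnit hp hpu hcl
  exact ⟨fun hT => ⟨hM, natCast_sq_eq_zero_of_stabilizer_eq_bot hp hpu hM hneg hT⟩,
    fun h => stabilizer_eq_bot_of_sq_eq_zero hp hneg hcl hM h.2⟩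

end LocalRing

section Pi

variable {p : ℕ} {ι : Type*} {R : ι → Type*} [∀ i, CommRing (R i)]

theorem mem_unitPowers_pi {x : ∀ i, R i} :
    x ∈ unitPowers (∀ i, R i) p ↔ ∀ i, x i ∈ unitPowers (R i) p := by
  constructor
  · rintro ⟨u, rfl⟩ i
    exact ⟨MulEquiv.piUnits u i, by simp⟩
  · intro h
    choose u hu using h
    exact ⟨(Pi.isUnit_iff.2 fun i => (u i).isUnit).unit, funext fun i => by simp [hu]⟩

-- Mathlib's `Pi.nontrivial` asks for `Inhabited ι`.
instance [Nonempty ι] [∀ i, Nontrivial (R i)] : Nontrivial (∀ i, R i) :=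
  Pi.nontrivial_at (Classical.arbitrary ι)

theorem add_mem_of_apply_eq [Nonempty ι] [∀ i, Nontrivial (R i)]
    (hneg : (-1 : ∀ i, R i) ∈ unitPowers (∀ i, R i) p) {X : Set (∀ i, R i)}
    (hX : (pUnitaryCayley (∀ i, R i) p).IsHomogeneousSet X) {x y s : ∀ i, R i} (hx : x ∈ X)
    (hy : y ∈ X) (hs : s ∈ unitPowers (∀ i, R i) p) {i : ι} (hi : (x + s) i = y i) :
    x + s ∈ X := by
  by_contra hxs
  rcases hX _ hxs with hall | hnone
  · have := mem_unitPowers_pi.1 ((adj_iff hneg).1 (hall y hy)) i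
    rw [Pi.sub_apply, hi, sub_self] at this
    exact zero_notMem_unitPowers this
  · exact hnone x hx ((adj_iff hneg).2 (by simpa using hs))

theorem mulSingle_mem_unitPowers [DecidableEq ι] {j : ι} {a : R j}
    (ha : a ∈ unitPowers (R j) p) :
    Pi.mulSingle j a ∈ unitPowers (∀ i, R i) p :=
  mem_unitPowers_pi.2 fun i => by
    rcases eq_or_ne i j with rfl | h
    · simpa using ha
    · simp [Pi.mulSingle_eq_of_ne h, one_mem]

/-- Starting from `0`, add elements of `S` whose `j`-th coordinates alternate between `y j` and
`-y j`: the `j`-th coordinate alternates between `0` and `y j`, which `0, y ∈ X` share, so the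
sums stay in `X`, while the `i₀`-th coordinates are arbitrary. -/
theorem exists_mem_apply_eq [DecidableEq ι] [Nonempty ι] [∀ i, Nontrivial (R i)]
    (hneg : (-1 : ∀ i, R i) ∈ unitPowers (∀ i, R i) p)
    (hcl : ∀ i, AddSubgroup.closure (unitPowers (R i) p : Set (R i)) = ⊤)
    {X : Set (∀ i, R i)} (hX : (pUnitaryCayley (∀ i, R i) p).IsHomogeneousSet X)
    (h0 : 0 ∈ X) {i₀ j : ι} (hij : i₀ ≠ j) {y : ∀ i, R i} (hy : y ∈ X)
    (hyj : y j ∈ unitPowers (R j) p) (a : R i₀) : ∃ x ∈ X, x i₀ = a := by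
  have hnegi : ∀ i, (-1 : R i) ∈ unitPowers (R i) p := mem_unitPowers_pi.1 hneg
  let A : Set (R i₀) := (fun x => x i₀) '' {x | x ∈ X ∧ (x j = 0 ∨ x j = y j)}
  suffices A = Set.univ by
    obtain ⟨x, ⟨hx, -⟩, hxa⟩ := Set.eq_univ_iff_forall.1 this a
    exact ⟨x, hx, hxa⟩
  refine eq_univ_of_add_mem (hnegi i₀) (hcl i₀) ⟨0, ⟨h0, Or.inl rfl⟩, rfl⟩ ?_
  rintro _ ⟨x, ⟨hx, hxj⟩, rfl⟩ t ht
  obtain ⟨τ, hτ, z, hz, hxz, hzj⟩ : ∃ τ ∈ unitPowers (R j) p, ∃ z ∈ X,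
      x j + τ = z j ∧ (z j = 0 ∨ z j = y j) := by
    rcases hxj with h | h
    · exact ⟨y j, hyj, y, hy, by simp [h], Or.inr rfl⟩
    · exact ⟨-y j, neg_mem_unitPowers (hnegi j) hyj, 0, h0, by simp [h], Or.inl rfl⟩
  let s := Pi.mulSingle j τ * Pi.mulSingle i₀ t
  have hs : s ∈ unitPowers (∀ i, R i) p :=
    mul_mem (mulSingle_mem_unitPowers hτ) (mulSingle_mem_unitPowers ht)
  have hxs : (x + s) j = z j := by simp [s, Pi.mulSingle_eq_of_ne hij.symm, hxz]
  refine ⟨x + s, ⟨add_mem_of_apply_eq hneg hX hx hz hs hxs, hxs ▸ hzj⟩, ?_⟩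
  simp [s, Pi.mulSingle_eq_of_ne hij]

theorem eq_univ_of_isHomogeneousSet [DecidableEq ι] [Nontrivial ι] [∀ i, Nontrivial (R i)]
    [∀ i, Finite (R i)]
    (hneg : (-1 : ∀ i, R i) ∈ unitPowers (∀ i, R i) p)
    (hcl_i : ∀ i, AddSubgroup.closure (unitPowers (R i) p : Set (R i)) = ⊤)
    (hcl : AddSubgroup.closure (unitPowers (∀ i, R i) p : Set (∀ i, R i)) = ⊤)
    (hT : ∀ i, stabilizer (R i) p = ⊥) {X : Set (∀ i, R i)}
    (hX : (pUnitaryCayley (∀ i, R i) p).IsHomogeneousSet X) (h0 : 0 ∈ X) {d : ∀ i, R i}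
    (hd : d ∈ X) (hd0 : d ≠ 0) : X = Set.univ := by
  obtain ⟨j, hj⟩ := Function.ne_iff.1 hd0
  obtain ⟨σ, hσ, hσd⟩ : ∃ σ ∈ unitPowers (R j) p, σ - d j ∉ unitPowers (R j) p := by
    by_contra! h
    have : -d j ∈ stabilizer (R j) p := fun s hs => by simpa [sub_eq_add_neg] using h s hs
    exact hj (by simpa [hT j] using this)
  have hσX : Pi.mulSingle j σ ∈ X := by
    by_contra h
    rcases hX _ h with hall | hnone
    · exact hσd (by simpa using mem_unitPowers_pi.1 ((adj_iff hneg).1 (hall d hd)) j)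
    · exact hnone 0 h0 ((adj_iff hneg).2 (by simpa using mulSingle_mem_unitPowers hσ))
  obtain ⟨i₀, hi₀⟩ := exists_ne j
  refine eq_univ_of_add_mem hneg hcl h0 fun x hx s hs => ?_
  obtain ⟨y, hy, hyi⟩ :=
    exists_mem_apply_eq hneg hcl_i hX h0 hi₀ hσX (by simpa using hσ) ((x + s) i₀)
  exact add_mem_of_apply_eq hneg hX hx hy hs hyi.symm

theorem single_mem_stabilizer [DecidableEq ι] [Finite ι] [∀ i, Finite (R i)] {j : ι} {c : R j}
    (hc : c ∈ stabilizer (R j) p) :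
    Pi.single j c ∈ stabilizer (∀ i, R i) p := fun s hs =>
  mem_unitPowers_pi.2 fun i => by
    rcases eq_or_ne i j with rfl | h
    · simpa using hc _ (mem_unitPowers_pi.1 hs i)
    · simpa [Pi.single_eq_of_ne h] using mem_unitPowers_pi.1 hs i

theorem closure_eq_top_of_isPrimeGraph_pi [DecidableEq ι] [Fintype ι] [Nonempty ι]
    [∀ i, Fintype (R i)] [∀ i, Nontrivial (R i)]
    (hneg : (-1 : ∀ i, R i) ∈ unitPowers (∀ i, R i) p)
    (hG : (pUnitaryCayley (∀ i, R i) p).IsPrimeGraph) (j : ι) :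
    AddSubgroup.closure (unitPowers (R j) p : Set (R j)) = ⊤ := by
  have := eq_top_of_isPrimeGraph hneg hG
    (H := (AddSubgroup.closure (unitPowers (R j) p : Set (R j))).comap (Pi.evalAddMonoidHom R j))
    fun x hx => AddSubgroup.subset_closure (mem_unitPowers_pi.1 hx j)
  exact eq_top_iff.2 fun a _ => by
    simpa using (AddSubgroup.eq_top_iff' _).1 this (Pi.single j a)

theorem stabilizer_eq_bot_of_isPrimeGraph [DecidableEq ι] [Fintype ι] [Nontrivial ι]
    [∀ i, Fintype (R i)] [∀ i, Nontrivial (R i)]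
    (hneg : (-1 : ∀ i, R i) ∈ unitPowers (∀ i, R i) p)
    (hG : (pUnitaryCayley (∀ i, R i) p).IsPrimeGraph) (j : ι) : stabilizer (R j) p = ⊥ := by
  have hH : (stabilizer (R j) p).map (AddMonoidHom.single R j) ≤ stabilizer (∀ i, R i) p :=
    AddSubgroup.map_le_iff_le_comap.2 fun _ hc => single_mem_stabilizer hc
  rcases SimpleGraph.IsPrimeGraph.eq_bot_or_eq_top hG
    (isHomogeneousSet_of_le_stabilizer hneg hH) with h | h
  · exact (AddSubgroup.map_eq_bot_iff_of_injective _ (Pi.single_injective j)).1 h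
  · obtain ⟨i, hij⟩ := exists_ne j
    obtain ⟨c, -, hc⟩ := (AddSubgroup.eq_top_iff' _).1 h (Pi.single i (1 : R i))
    simpa [Pi.single_eq_of_ne hij] using congrFun hc i

theorem isPrimeGraph_pi_iff [DecidableEq ι] [Fintype ι] [Nontrivial ι] [∀ i, Fintype (R i)]
    [∀ i, Nontrivial (R i)] (hneg : (-1 : ∀ i, R i) ∈ unitPowers (∀ i, R i) p) :
    (pUnitaryCayley (∀ i, R i) p).IsPrimeGraph ↔
      (∀ i, AddSubgroup.closure (unitPowers (R i) p : Set (R i)) = ⊤) ∧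
        AddSubgroup.closure (unitPowers (∀ i, R i) p : Set (∀ i, R i)) = ⊤ ∧
        ∀ i, stabilizer (R i) p = ⊥ :=
  ⟨fun hG => ⟨closure_eq_top_of_isPrimeGraph_pi hneg hG,
      eq_top_of_isPrimeGraph hneg hG AddSubgroup.subset_closure,
      stabilizer_eq_bot_of_isPrimeGraph hneg hG⟩,
    fun ⟨hcl_i, hcl, hT⟩ => isPrimeGraph_of_eq_univ fun _ hX h0 _ hd hd0 =>
      eq_univ_of_isHomogeneousSet hneg hcl_i hcl hT hX h0 hd hd0⟩

end Pi

end PUnitaryCayley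

open PUnitaryCayley in
theorem stmt_19 (p : ℕ) (hp : p.Prime) (ι : Type*) [Fintype ι] [DecidableEq ι] (hι : 2 ≤ Fintype.card ι)
    (R : ι → Type*) [∀ i, CommRing (R i)] [∀ i, IsLocalRing (R i)] [∀ i, Fintype (R i)]
    (hneg : ∃ u : (∀ i, R i)ˣ, (u : ∀ i, R i) ^ p = -1) :
    (pUnitaryCayley (∀ i, R i) p).IsPrimeGraph ↔
      ((∀ i, (pUnitaryCayley (R i) p).Connected) ∧
        (pUnitaryCayley (∀ i, R i) p).Connected ∧
        (∀ i, IsUnit (p : R i) → IsField (R i)) ∧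
        (∀ i, ¬ IsUnit (p : R i) →
          IsLocalRing.maximalIdeal (R i) = Ideal.span {(p : R i)} ∧
            (p : R i) ^ 2 = 0)) := by
  have : Nontrivial ι := Fintype.one_lt_card_iff_nontrivial.1 hι
  have hnegi : ∀ i, (-1 : R i) ∈ unitPowers (R i) p := mem_unitPowers_pi.1 hneg
  rw [isPrimeGraph_pi_iff hneg, connected_iff_closure_eq_top hneg]
  simp only [connected_iff_closure_eq_top (hnegi _), ← forall_and]
  refine and_congr_right fun hcl_i => and_congr_right fun _ => forall_congr' fun i => ?_
  by_cases hpu : IsUnit (p : R i)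
  · simp [hpu, stabilizer_eq_bot_iff_isField hpu (hnegi i) (hcl_i i)]
  · simp [hpu, stabilizer_eq_bot_iff_of_not_isUnit hp hpu (hnegi i) (hcl_i i)]
end
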